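/- arXiv:2510.15660 — 4 statements merged into one kernel-verified Lean document; each statement's English description precedes it below -/
import Mathlib

section
/- Let G_w be an edge-weighted graph in which e = {x_{n-1}, x_n} is a leaf edge with trivial weight, i.e., x_n has unique neighbor x_{n-1} in G and w(e) = 1. Then for all t ≥ 2, I(G_w)^t : (x_{n-1} x_n) = I(G_w)^{t-1}. -/
open MvPolynomial

/-- The edge ideal of an edge-weighted graph `G_w`:
`I(G_w) = (x^{w(xy)} y^{w(xy)} : {x,y} ∈ E(G))`. -/
noncomputable def edgeIdealW {V K : Type*} [Field K] (G : SimpleGraph V) (w : V → V → ℕ) :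
    Ideal (MvPolynomial V K) :=
  Ideal.span {p | ∃ i j, G.Adj i j ∧ p = (X i * X j) ^ w i j}

/-!
All ideals involved are monomial, so a monomial `u` lies in `I^t : x_a x_b` iff `u x_a x_b` is
divisible by a product `e_1 ⋯ e_t` of generators, and it suffices to drop one factor `e_i` so that
the remaining product divides `u`. If some `e_i` involves `x_b`, it is `x_a x_b` itself, because
`b` is a leaf and `w(ab) = 1`. Otherwise `x_b` does not divide the product: drop a factor
involving `x_a` if `x_a` divides the product to a higher power than it divides `u`, and any
factor if not.
-/

open scoped Pointwise

namespace MvPolynomial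

variable {σ R : Type*} [CommSemiring R]

theorem span_monomial_image_pow (S : Set (σ →₀ ℕ)) (n : ℕ) :
    Ideal.span ((fun d => monomial d (1 : R)) '' S) ^ n =
      Ideal.span ((fun d => monomial d (1 : R)) '' (n • S)) := by
  induction n with
  | zero => simp
  | succ n ih =>
    rw [pow_succ, ih, Ideal.span_mul_span', succ_nsmul, ← Set.image2_mul, ← Set.image2_add,
      Set.image_image2, Set.image2_image_left, Set.image2_image_right]
    simp only [monomial_mul, mul_one]

theorem colon_span_monomial_le {T T' : Set (σ →₀ ℕ)} {m : σ →₀ ℕ}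
    (h : ∀ s ∈ T, ∀ u, s ≤ u + m → ∃ s' ∈ T', s' ≤ u) :
    (Ideal.span ((fun d => monomial d (1 : R)) '' T)).colon
        ((Ideal.span {monomial m 1} : Ideal (MvPolynomial σ R)) : Set (MvPolynomial σ R)) ≤
      Ideal.span ((fun d => monomial d (1 : R)) '' T') := by
  intro f hf
  rw [Submodule.mem_colon_span_singleton, smul_eq_mul, mem_ideal_span_monomial_image] at hf
  rw [mem_ideal_span_monomial_image]
  intro u hu
  obtain ⟨s, hs, hsu⟩ := hf (u + m) (by simpa [mem_support_iff, coeff_mul_monomial] using hu)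
  exact h s hs u hsu

theorem X_mul_X_pow (i j : σ) (n : ℕ) :
    (X i * X j : MvPolynomial σ R) ^ n =
      monomial (n • (Finsupp.single i 1 + Finsupp.single j 1)) 1 := by
  rw [mul_pow, X_pow_eq_monomial, X_pow_eq_monomial, monomial_mul, one_mul, smul_add,
    Finsupp.smul_single', Finsupp.smul_single', mul_one]

end MvPolynomial

namespace Finsupp

variable {σ : Type*} {a b : σ}

theorem exists_sum_le_add_of_sum_le_add_single_add_single {ι : Type*} [Fintype ι] [Nonempty ι]
    (hab : a ≠ b) {f : ι → σ →₀ ℕ} (hf : ∀ i, f i b ≠ 0 → f i = single a 1 + single b 1)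
    {u : σ →₀ ℕ} (h : ∑ i, f i ≤ u + (single a 1 + single b 1)) : ∃ i, ∑ j, f j ≤ u + f i := by
  by_cases hb : ∃ i, f i b ≠ 0
  · obtain ⟨i, hi⟩ := hb
    exact ⟨i, hf i hi ▸ h⟩
  push Not at hb
  have hsb : (∑ j, f j) b = 0 := by simp [finsetSum_apply, hb]
  obtain ⟨i, hi⟩ : ∃ i, u a < (∑ j, f j) a → f i a ≠ 0 := by
    by_cases hlt : u a < (∑ j, f j) a
    · obtain ⟨i, -, hi⟩ := Finset.exists_ne_zero_of_sum_ne_zero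
        (s := Finset.univ) (f := fun j => f j a) (by rw [← finsetSum_apply]; omega)
      exact ⟨i, fun _ => hi⟩
    · exact ⟨Classical.arbitrary ι, fun h => absurd h hlt⟩
  classical
  refine ⟨i, le_def.mpr fun v => ?_⟩
  have hv := le_def.mp h v
  simp only [coe_add, Pi.add_apply, single_apply] at hv ⊢
  split_ifs at hv <;> grind

theorem exists_le_of_mem_succ_nsmul (hab : a ≠ b) {S : Set (σ →₀ ℕ)}
    (hS : ∀ e ∈ S, e b ≠ 0 → e = single a 1 + single b 1) {n : ℕ} {s u : σ →₀ ℕ}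
    (hs : s ∈ (n + 1) • S) (h : s ≤ u + (single a 1 + single b 1)) : ∃ s' ∈ n • S, s' ≤ u := by
  obtain ⟨f, rfl⟩ := Set.mem_nsmul.mp hs
  rw [List.sum_ofFn] at h
  obtain ⟨i, hi⟩ := exists_sum_le_add_of_sum_le_add_single_add_single hab
    (fun i => hS (f i) (f i).2) h
  refine ⟨∑ j, f (i.succAbove j), Set.mem_nsmul.mpr ⟨fun j => f (i.succAbove j), List.sum_ofFn⟩, ?_⟩
  rw [Fin.sum_univ_succAbove _ i, add_comm u] at hi
  exact le_of_add_le_add_left hi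

end Finsupp

def edgeExponents {V : Type*} (G : SimpleGraph V) (w : V → V → ℕ) : Set (V →₀ ℕ) :=
  {d | ∃ i j, G.Adj i j ∧ d = w i j • (Finsupp.single i 1 + Finsupp.single j 1)}

theorem edgeIdealW_eq_span_monomial {V K : Type*} [Field K] (G : SimpleGraph V) (w : V → V → ℕ) :
    edgeIdealW (K := K) G w = Ideal.span ((fun d => monomial d (1 : K)) '' edgeExponents G w) := by
  rw [edgeIdealW]
  congr 1
  ext p
  simp [edgeExponents, X_mul_X_pow, eq_comm]

theorem edgeExponents_eq_of_apply_ne_zero {V : Type*} {G : SimpleGraph V} {w : V → V → ℕ}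
    (hsymm : ∀ i j, w i j = w j i) {a b : V} (hleaf : ∀ c, G.Adj c b → c = a) (hw : w a b = 1)
    {e : V →₀ ℕ} (he : e ∈ edgeExponents G w) (heb : e b ≠ 0) :
    e = Finsupp.single a 1 + Finsupp.single b 1 := by
  obtain ⟨i, j, hij, rfl⟩ := he
  have hb : i = b ∨ j = b := by
    by_contra! hne
    simp [hne.1.symm, hne.2.symm] at heb
  rcases hb with rfl | rfl
  · rw [hleaf j hij.symm, hsymm, hw, one_smul, add_comm]
  · rw [hleaf i hij, hw, one_smul]

theorem colon_leaf_edge_general {V K : Type*} [Field K] (G : SimpleGraph V) (w : V → V → ℕ)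
    (hsymm : ∀ i j, w i j = w j i)
    (a b : V) (hab : G.Adj a b) (hleaf : ∀ c, G.Adj c b → c = a) (hw : w a b = 1)
    (t : ℕ) (ht : 2 ≤ t) :
    (edgeIdealW (K := K) G w ^ t).colon ((Ideal.span {X a * X b} : Ideal (MvPolynomial V K)) : Set (MvPolynomial V K)) =
      edgeIdealW (K := K) G w ^ (t - 1) := by
  obtain ⟨n, rfl⟩ : ∃ n, t = n + 1 := ⟨t - 1, by omega⟩
  rw [Nat.add_sub_cancel]
  apply le_antisymm
  · have hXab : (X a * X b : MvPolynomial V K) =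
        monomial (Finsupp.single a 1 + Finsupp.single b 1) 1 := by
      simpa using X_mul_X_pow (R := K) a b 1
    rw [hXab, edgeIdealW_eq_span_monomial, span_monomial_image_pow, span_monomial_image_pow]
    exact colon_span_monomial_le fun s hs u hsu =>
      Finsupp.exists_le_of_mem_succ_nsmul hab.ne
        (fun e he => edgeExponents_eq_of_apply_ne_zero hsymm hleaf hw he) hs hsu
  · intro f hf
    rw [Submodule.mem_colon_span_singleton, smul_eq_mul, pow_succ]
    exact Ideal.mul_mem_mul hf (Ideal.subset_span ⟨a, b, hab, by rw [hw, pow_one]⟩)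

/-- If `{a,b}` is a leaf edge of `G_w` with trivial weight (i.e. `b` has
unique neighbour `a` and `w(ab) = 1`), then for all `t ≥ 2`,
`I(G_w)^t : (x_a x_b) = I(G_w)^{t-1}`. -/
theorem colon_leaf_edge {V K : Type*} [Field K] (G : SimpleGraph V) (w : V → V → ℕ)
    (hsymm : ∀ i j, w i j = w j i) (hpos : ∀ i j, G.Adj i j → 0 < w i j)
    (a b : V) (hab : G.Adj a b) (hleaf : ∀ c, G.Adj c b → c = a) (hw : w a b = 1)
    (t : ℕ) (ht : 2 ≤ t) :
    (edgeIdealW (K := K) G w ^ t).colon ((Ideal.span {X a * X b} : Ideal (MvPolynomial V K)) : Set (MvPolynomial V K)) =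
      edgeIdealW (K := K) G w ^ (t - 1) :=
  colon_leaf_edge_general G w hsymm a b hab hleaf hw t ht
end

section
/- Let G_w be an edge-weighted graph where x_n is a leaf of G with unique neighbor x_{n-1}, and let f be a nonzero monomial of S whose support is disjoint from {n-1, n}. Then for all t ≥ 1, I(G_w)^t : f ⊆ (I(H_w)^t : f) + I(G_w), where H is the induced subgraph of G on V(G) \ {x_n}. -/
/-!
Every ideal in sight is a monomial ideal, so the inclusion can be checked on exponent vectors:
a monomial `m` lies in `I(G_w)^t : f` iff `m f` is divisible by a product of `t` edge
generators. If none of these factors is the leaf generator `(x_a x_b)^{w(ab)}`, the product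
already lies in `I(H_w)^t`. Otherwise `(x_a x_b)^{w(ab)}` divides `m f`, and since `f` involves
neither `x_a` nor `x_b`, it divides `m`, so `m ∈ I(G_w)`.
-/

open MvPolynomial

/-- The induced subgraph of `G` on `V(G) \ {b}`, kept on the same vertex type. -/
def deleteVertex {V : Type*} (G : SimpleGraph V) (b : V) : SimpleGraph V where
  Adj i j := G.Adj i j ∧ i ≠ b ∧ j ≠ b
  symm := ⟨fun i j ⟨h, hi, hj⟩ => ⟨h.symm, hj, hi⟩⟩
  loopless := ⟨fun i ⟨h, _, _⟩ => G.ne_of_adj h rfl⟩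

open Pointwise

section MonomialSpan

variable {σ : Type*} (R : Type*) [CommSemiring R]

noncomputable def monomialSpan (A : Set (σ →₀ ℕ)) : Ideal (MvPolynomial σ R) :=
  Ideal.span ((fun s => monomial s (1 : R)) '' A)

variable {R}

theorem mem_monomialSpan {A : Set (σ →₀ ℕ)} {p : MvPolynomial σ R} :
    p ∈ monomialSpan R A ↔ ∀ e ∈ p.support, ∃ s ∈ A, s ≤ e :=
  mem_ideal_span_monomial_image

theorem monomialSpan_le_monomialSpan {A B : Set (σ →₀ ℕ)}
    (h : ∀ e ∈ A, ∃ s ∈ B, s ≤ e) : monomialSpan R A ≤ monomialSpan R B := by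
  refine Ideal.span_le.mpr ?_
  rintro _ ⟨e, he, rfl⟩
  refine mem_monomialSpan.mpr fun e' he' => ?_
  rw [Finset.mem_singleton.mp (support_monomial_subset he')]
  exact h e he

theorem monomialSpan_sup (A B : Set (σ →₀ ℕ)) :
    monomialSpan R A ⊔ monomialSpan R B = monomialSpan R (A ∪ B) := by
  rw [monomialSpan, monomialSpan, monomialSpan, Set.image_union, Ideal.span_union]

-- Here `t • A` is the `t`-fold sumset `A + ⋯ + A` (`Set.NSMul`), not the dilate of `A` by `t`.
theorem monomialSpan_pow (A : Set (σ →₀ ℕ)) (t : ℕ) :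
    monomialSpan R A ^ t = monomialSpan R (t • A) := by
  induction t with
  | zero =>
    rw [pow_zero, zero_nsmul, monomialSpan, Set.image_zero, monomial_zero', C_1,
      Ideal.span_singleton_one, Ideal.one_eq_top]
  | succ n ih =>
    rw [pow_succ, ih, monomialSpan, monomialSpan, Ideal.span_mul_span', monomialSpan, succ_nsmul,
      ← Set.image2_add, ← Set.image2_mul, Set.image2_image_left, Set.image2_image_right,
      Set.image_image2]
    exact congrArg Ideal.span (Set.image2_congr fun x _ y _ => by rw [monomial_mul, mul_one])

theorem mem_support_mul_monomial_one {p : MvPolynomial σ R} {d e : σ →₀ ℕ} :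
    e ∈ (p * monomial d (1 : R)).support ↔ d ≤ e ∧ e - d ∈ p.support := by
  classical
  rw [mem_support_iff, mem_support_iff, coeff_mul_monomial', mul_one]
  split_ifs with h <;> simp [h]

theorem monomialSpan_colon (A : Set (σ →₀ ℕ)) (d : σ →₀ ℕ) :
    (monomialSpan R A).colon (Ideal.span {monomial d (1 : R)}) =
      monomialSpan R {e | ∃ s ∈ A, s ≤ e + d} := by
  ext p
  rw [Ideal.mem_colon_span_singleton, mem_monomialSpan, mem_monomialSpan]
  constructor
  · intro h e he
    obtain ⟨s, hs, hse⟩ := h (e + d) (mem_support_mul_monomial_one.mpr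
      ⟨le_add_self, by rwa [add_tsub_cancel_right]⟩)
    exact ⟨e, ⟨s, hs, hse⟩, le_rfl⟩
  · intro h e he
    obtain ⟨hde, he'⟩ := mem_support_mul_monomial_one.mp he
    obtain ⟨e₀, ⟨s, hs, hse₀⟩, he₀⟩ := h (e - d) he'
    refine ⟨s, hs, ?_⟩
    calc s ≤ e₀ + d := hse₀
      _ ≤ e - d + d := add_le_add_left he₀ d
      _ = e := tsub_add_cancel_of_le hde

end MonomialSpan

theorem Set.mem_nsmul_or_exists_le_of_mem_nsmul_union {M : Type*} [AddCommMonoid M]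
    [PartialOrder M] [CanonicallyOrderedAdd M] {B C : Set M}
    {t : ℕ} {s : M} (hs : s ∈ t • (B ∪ C)) :
    s ∈ t • B ∨ ∃ c ∈ C, c ≤ s := by
  induction t generalizing s with
  | zero => exact Or.inl hs
  | succ n ih =>
    rw [succ_nsmul] at hs ⊢
    obtain ⟨x, hx, y, hy | hy, rfl⟩ := Set.mem_add.mp hs
    · rcases ih hx with hxB | ⟨c, hc, hcx⟩
      · exact Or.inl (Set.add_mem_add hxB hy)
      · exact Or.inr ⟨c, hc, le_add_right hcx⟩
    · exact Or.inr ⟨y, hy, le_add_self⟩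

theorem Finsupp.le_of_le_add_of_disjoint {σ : Type*} {c e d : σ →₀ ℕ} (h : c ≤ e + d)
    (hcd : ∀ v, c v ≠ 0 → d v = 0) : c ≤ e := fun v => by
  by_cases hc : c v = 0
  · simp [hc]
  · simpa [hcd v hc] using h v

section EdgeIdeal

variable {V : Type*}

def edgeExp (G : SimpleGraph V) (w : V → V → ℕ) : Set (V →₀ ℕ) :=
  {s | ∃ i j, G.Adj i j ∧ s = Finsupp.single i (w i j) + Finsupp.single j (w i j)}

theorem edgeIdealW_eq_monomialSpan (K : Type*) [Field K] (G : SimpleGraph V) (w : V → V → ℕ) :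
    edgeIdealW (K := K) G w = monomialSpan K (edgeExp G w) := by
  have hgen (i j : V) (n : ℕ) : (X i * X j : MvPolynomial V K) ^ n =
      monomial (Finsupp.single i n + Finsupp.single j n) 1 := by
    rw [mul_pow, X_pow_eq_monomial, X_pow_eq_monomial, monomial_mul, mul_one]
  refine congrArg Ideal.span (Set.ext fun p => ⟨?_, ?_⟩)
  · rintro ⟨i, j, hij, rfl⟩
    exact ⟨_, ⟨i, j, hij, rfl⟩, (hgen i j _).symm⟩
  · rintro ⟨_, ⟨i, j, hij, rfl⟩, rfl⟩
    exact ⟨i, j, hij, (hgen i j _).symm⟩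

theorem edgeExp_subset_deleteVertex_union {G : SimpleGraph V} (w : V → V → ℕ) {a b : V}
    (hleaf : ∀ c, G.Adj c b → c = a) :
    edgeExp G w ⊆ edgeExp (deleteVertex G b) w ∪
      {s ∈ edgeExp G w | ∀ v, s v ≠ 0 → v = a ∨ v = b} := by
  rintro _ ⟨i, j, hij, rfl⟩
  have hsupp (v : V) (hv : (Finsupp.single i (w i j) + Finsupp.single j (w i j)) v ≠ 0) :
      v = i ∨ v = j := by
    by_contra! hvij
    simp [hvij.1.symm, hvij.2.symm] at hv
  by_cases hib : i = b
  · obtain rfl : j = a := hleaf j (hib ▸ hij.symm)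
    exact Or.inr ⟨⟨i, j, hij, rfl⟩,
      fun v hv => (hsupp v hv).elim (Or.inr ∘ (·.trans hib)) Or.inl⟩
  by_cases hjb : j = b
  · obtain rfl : i = a := hleaf i (hjb ▸ hij)
    exact Or.inr ⟨⟨i, j, hij, rfl⟩, fun v hv => (hsupp v hv).imp id (·.trans hjb)⟩
  exact Or.inl ⟨i, j, ⟨hij, hib, hjb⟩, rfl⟩

end EdgeIdeal

theorem colon_subset_deleteLeaf_general {V K : Type*} [Field K]
    (G : SimpleGraph V) (w : V → V → ℕ)
    (a b : V) (hleaf : ∀ c, G.Adj c b → c = a)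
    (d : V →₀ ℕ) (hda : d a = 0) (hdb : d b = 0)
    (t : ℕ) :
    (edgeIdealW (K := K) G w ^ t).colon (Ideal.span {monomial d (1 : K)}) ≤
      (edgeIdealW (K := K) (deleteVertex G b) w ^ t).colon
          (Ideal.span {monomial d (1 : K)}) ⊔
        edgeIdealW (K := K) G w := by
  simp only [edgeIdealW_eq_monomialSpan, monomialSpan_pow, monomialSpan_colon, monomialSpan_sup]
  refine monomialSpan_le_monomialSpan ?_
  rintro e ⟨s, hs, hse⟩
  have hs' := Set.nsmul_subset_nsmul_left (edgeExp_subset_deleteVertex_union w hleaf) hs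
  rcases Set.mem_nsmul_or_exists_le_of_mem_nsmul_union hs' with hsH | ⟨c, ⟨hc, hcab⟩, hcs⟩
  · exact ⟨e, Or.inl ⟨s, hsH, hse⟩, le_rfl⟩
  · refine ⟨c, Or.inr hc, Finsupp.le_of_le_add_of_disjoint (hcs.trans hse) fun v hv => ?_⟩
    rcases hcab v hv with rfl | rfl
    exacts [hda, hdb]

/-- Let `b` be a leaf of `G` with unique neighbour `a`, and let `f` be a
nonzero monomial whose support avoids `a` and `b`.  Then for all `t ≥ 1`,
`I(G_w)^t : f ⊆ (I(H_w)^t : f) + I(G_w)`, where `H` is the induced subgraph of `G` on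
`V(G) \ {b}`. -/
theorem colon_subset_deleteLeaf {V K : Type*} [Field K]
    (G : SimpleGraph V) (w : V → V → ℕ)
    (hsymm : ∀ i j, w i j = w j i) (hpos : ∀ i j, G.Adj i j → 0 < w i j)
    (a b : V) (hab : G.Adj a b) (hleaf : ∀ c, G.Adj c b → c = a)
    (d : V →₀ ℕ) (hda : d a = 0) (hdb : d b = 0)
    (t : ℕ) (ht : 1 ≤ t) :
    (edgeIdealW (K := K) G w ^ t).colon (Ideal.span {monomial d (1 : K)}) ≤
      (edgeIdealW (K := K) (deleteVertex G b) w ^ t).colon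
          (Ideal.span {monomial d (1 : K)}) ⊔
        edgeIdealW (K := K) G w :=
  colon_subset_deleteLeaf_general G w a b hleaf d hda hdb t
end

section
/- Let n ≥ 6, 3 ≤ a ≤ ⌊n/2⌋, ω > 1, 3 ≤ t ≤ n - 3, and write t - 3 = c + d with 0 ≤ c ≤ a - 3 and 0 ≤ d ≤ n - a - 3. Let I = (u_1,...,u_{a-1}, u_a^ω, u_{a+1},...,u_{n-1}) with u_j = x_j x_{j+1}, and h = u_a^ω · x_{a-1} · x_{a+2} · (∏_{i=a-c-1}^{a-2} u_i) · (∏_{i=a+2}^{a+d+1} u_i). Then I^t : h = I + (x_{a-2i-1} : 0 ≤ i ≤ ⌈c/2⌉) + (x_{a+2i+2} : 0 ≤ i ≤ ⌈d/2⌉) + I(K_{U,V}), where U = {x_{a-c-2},...,x_a} \ {x_{a-2i-1} : 0 ≤ i ≤ ⌈c/2⌉} and V = {x_{a+1},...,x_{a+d+3}} \ {x_{a+2i+2} : 0 ≤ i ≤ ⌈d/2⌉}. -/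
/-!
All ideals here are monomial ideals, so `I^t : h` is generated by the monomials `x^(s - k)` with
`x^k = h` and `x^s` a product of `t` generators of `I`, and the claim becomes a comparison of
exponent vectors.

Apart from `u_a^ω`, `h` consists of two half-paths, `x_{a-1} u_{a-c-1} ⋯ u_{a-2}` and
`x_{a+2} u_{a+2} ⋯ u_{a+d+1}`, which become paths with `c + 1` and `d + 1` edges once `x_a`,
resp. `x_{a+1}`, is added. For every generator `g` on the right, `g h` is divisible by a product
of `t = c + d + 3` generators: the extra vertices of `g` are absorbed by re-pairing a half-path
into doubled alternate edges, and `u_a^ω` (`ω ≥ 2`) supplies up to `x_a² x_{a+1}²`.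

Conversely, write `s = ∑ m_j g_j` with `∑ m_j = t`. An edge used outside the support of `h`, or
`m_a ≥ 2`, leaves a generator of `I` in `x^(s - k)`. Otherwise at least `c + 2` edges lie left
of `a`, or `d + 2` right of it, or `m_a = 1` with `c + 1` on the left and `d + 1` on the right.
Since `h` has fewer edges on each side, comparing pairs of consecutive edges (pigeonhole) gives a
vertex `x_{a-2i-1}`, a vertex `x_{a+2i+2}`, or a vertex of `U` and one of `V` at which `s`
exceeds `k`.
-/

open MvPolynomial Finset

/-- The variable `x_i` of `K[x_1,…,x_n]` (1-based indexing). -/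
noncomputable def Xv (n : ℕ) (K : Type*) [Field K] (i : ℕ) : MvPolynomial (Fin n) K :=
  if h : 1 ≤ i ∧ i ≤ n then X ⟨i - 1, by omega⟩ else 0

/-- `u_j = x_j x_{j+1}`. -/
noncomputable def pu (n : ℕ) (K : Type*) [Field K] (j : ℕ) : MvPolynomial (Fin n) K :=
  Xv n K j * Xv n K (j + 1)

/-- The edge ideal `I = (u_1,…,u_{a-1}, u_a^ω, u_{a+1},…,u_{n-1})` of the edge-weighted
path with a single non-trivial weight `ω` at position `a`. -/
noncomputable def pathIdeal1 (n : ℕ) (K : Type*) [Field K] (a ω : ℕ) :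
    Ideal (MvPolynomial (Fin n) K) :=
  Ideal.span {p | ∃ j, 1 ≤ j ∧ j ≤ n - 1 ∧ p = pu n K j ^ (if j = a then ω else 1)}

open Pointwise

namespace MvPolynomial

variable {σ R : Type*} [CommSemiring R]

lemma image_monomial_one_nsmul (A : Set (σ →₀ ℕ)) (t : ℕ) :
    (fun s => monomial s (1 : R)) '' (t • A) = ((fun s => monomial s (1 : R)) '' A) ^ t := by
  induction t with
  | zero => simp [← Set.singleton_zero, Set.singleton_one]
  | succ t ih =>
    ext p
    simp only [succ_nsmul, pow_succ, ← ih, Set.mem_image, Set.mem_add, Set.mem_mul]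
    constructor
    · rintro ⟨_, ⟨x, hx, y, hy, rfl⟩, rfl⟩
      exact ⟨_, ⟨x, hx, rfl⟩, _, ⟨y, hy, rfl⟩, by rw [monomial_mul, one_mul]⟩
    · rintro ⟨_, ⟨x, hx, rfl⟩, _, ⟨y, hy, rfl⟩, rfl⟩
      exact ⟨x + y, ⟨x, hx, y, hy, rfl⟩, by rw [monomial_mul, one_mul]⟩

lemma span_monomial_one_pow (A : Set (σ →₀ ℕ)) (t : ℕ) :
    Ideal.span ((fun s => monomial s (1 : R)) '' A) ^ t =
      Ideal.span ((fun s => monomial s (1 : R)) '' (t • A)) := by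
  rw [image_monomial_one_nsmul]
  exact Submodule.span_pow _ t

lemma colon_span_monomial_one (A : Set (σ →₀ ℕ)) (k : σ →₀ ℕ) :
    (Ideal.span ((fun s => monomial s (1 : R)) '' A)).colon
        (Ideal.span {monomial k (1 : R)} : Set (MvPolynomial σ R)) =
      Ideal.span ((fun s => monomial s (1 : R)) '' ((· - k) '' A)) := by
  ext f
  rw [Ideal.mem_colon_span_singleton, mem_ideal_span_monomial_image,
    mem_ideal_span_monomial_image]
  constructor
  · intro H e he
    have hco : coeff (e + k) (f * monomial k 1) ≠ 0 := by
      rwa [coeff_mul_monomial, mul_one, ← mem_support_iff]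
    obtain ⟨s, hs, hle⟩ := H _ (mem_support_iff.mpr hco)
    exact ⟨s - k, ⟨s, hs, rfl⟩, tsub_le_iff_right.mpr hle⟩
  · intro H e he
    rw [mem_support_iff, coeff_mul_monomial'] at he
    split_ifs at he with hk
    · rw [mul_one] at he
      obtain ⟨_, ⟨s, hs, rfl⟩, hle⟩ := H _ (mem_support_iff.mpr he)
      exact ⟨s, hs, tsub_le_iff_right.mp hle |>.trans (tsub_add_cancel_of_le hk).le⟩
    · exact absurd rfl he

lemma span_monomial_one_le_of_forall_exists_le {A B : Set (σ →₀ ℕ)}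
    (h : ∀ a ∈ A, ∃ b ∈ B, b ≤ a) :
    Ideal.span ((fun s => monomial s (1 : R)) '' A) ≤
      Ideal.span ((fun s => monomial s (1 : R)) '' B) := by
  classical
  rw [Ideal.span_le]
  rintro _ ⟨s, hs, rfl⟩
  refine mem_ideal_span_monomial_image.mpr fun e he => ?_
  rw [Finset.mem_singleton.mp (support_monomial_subset he)]
  exact h s hs

end MvPolynomial

namespace Set

variable {M ι : Type*} [AddCommMonoid M]

lemma mem_one_nsmul {A : Set M} {x : M} (hx : x ∈ A) : x ∈ 1 • A := by
  rwa [one_nsmul]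

lemma add_mem_nsmul {A : Set M} {x y : M} {k l t : ℕ} (hx : x ∈ k • A) (hy : y ∈ l • A)
    (h : k + l = t) : x + y ∈ t • A := by
  rw [← h, add_nsmul]
  exact add_mem_add hx hy

lemma sum_mem_card_nsmul {A : Set M} (S : Finset ι) {f : ι → M} (h : ∀ i ∈ S, f i ∈ A) :
    ∑ i ∈ S, f i ∈ #S • A := by
  simpa using finsetSum_mem_finsetSum S (fun _ => A) f h

lemma exists_sum_nsmul_of_mem_nsmul_image [DecidableEq ι] {G : ι → M} {S : Finset ι} {t : ℕ}
    {x : M} (hx : x ∈ t • (G '' S)) :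
    ∃ m : ι → ℕ, (∀ j ∉ S, m j = 0) ∧ ∑ j ∈ S, m j = t ∧
      x = ∑ j ∈ S, m j • G j := by
  induction t generalizing x with
  | zero =>
    rw [zero_nsmul, ← singleton_zero, mem_singleton_iff] at hx
    exact ⟨0, fun _ _ => rfl, by simp, by simp [hx]⟩
  | succ t ih =>
    rw [succ_nsmul] at hx
    obtain ⟨y, hy, _, ⟨j, hj, rfl⟩, rfl⟩ := hx
    obtain ⟨m, hm, hsum, rfl⟩ := ih hy
    refine ⟨m + Pi.single j 1, fun i hi => ?_, ?_, ?_⟩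
    · have : i ≠ j := fun h => hi (h ▸ hj)
      simp [hm i hi, this]
    · simp [sum_add_distrib, hsum, Finset.mem_coe.mp hj]
    · simp [add_smul, sum_add_distrib, Pi.single_apply, Finset.mem_coe.mp hj]

end Set

namespace Finset

lemma sum_Ico_eq_add_add (f : ℕ → ℕ) {l a r : ℕ} (hl : l ≤ a) (hr : a < r) :
    ∑ j ∈ Ico l r, f j = ∑ j ∈ Ico l a, f j + f a + ∑ j ∈ Ico (a + 1) r, f j := by
  rw [← sum_Ico_consecutive f hl hr.le, ← sum_Ico_consecutive f (Nat.le_succ a) hr,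
    sum_Ico_succ_top le_rfl, Ico_self, sum_empty, zero_add, add_assoc]

lemma sum_Ico_eq_sum_pairs (f : ℕ → ℕ) (L N : ℕ) :
    ∑ j ∈ Ico L (L + 2 * N), f j = ∑ i ∈ range N, (f (L + 2 * i) + f (L + 2 * i + 1)) := by
  induction N with
  | zero => simp
  | succ N ih =>
    rw [show L + 2 * (N + 1) = L + 2 * N + 1 + 1 by ring, sum_Ico_succ_top (by omega),
      sum_Ico_succ_top (by omega), ih, sum_range_succ, add_assoc]

lemma exists_pair_lt_of_sum_Ico_lt {m μ : ℕ → ℕ} {L N : ℕ}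
    (h : ∑ j ∈ Ico L (L + 2 * N), μ j < ∑ j ∈ Ico L (L + 2 * N), m j) :
    ∃ i < N, μ (L + 2 * i) + μ (L + 2 * i + 1) < m (L + 2 * i) + m (L + 2 * i + 1) := by
  rw [sum_Ico_eq_sum_pairs, sum_Ico_eq_sum_pairs] at h
  obtain ⟨i, hi, hlt⟩ := exists_lt_of_sum_lt h
  exact ⟨i, mem_range.mp hi, hlt⟩

lemma sum_ite_mem_Icc_le (s : Finset ℕ) (l r : ℕ) :
    ∑ j ∈ s, (if l ≤ j ∧ j ≤ r then 1 else 0) ≤ r + 1 - l := by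
  rw [sum_boole, Nat.cast_id, ← Nat.card_Icc]
  exact card_le_card fun j hj => by grind

end Finset

namespace Pi

lemma single_one_le_tsub {x k : ℕ → ℕ} {P : ℕ} (h : k P < x P) :
    Pi.single P 1 ≤ x - k := by
  intro Q
  simp only [Pi.single_apply, Pi.sub_apply]
  split_ifs with hQ
  · subst hQ; omega
  · exact Nat.zero_le _

lemma single_one_add_single_one_le_tsub {x k : ℕ → ℕ} {u v : ℕ} (huv : u ≠ v)
    (hu : k u < x u) (hv : k v < x v) : Pi.single u 1 + Pi.single v 1 ≤ x - k := by
  intro Q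
  simp only [Pi.add_apply, Pi.single_apply, Pi.sub_apply]
  split_ifs <;> subst_vars <;> omega

end Pi

namespace OneWeightPath

/- Exponent vectors are handled as functions on the positions `ℕ`: since `x_P = X ⟨P - 1⟩`,
the value at `P` becomes coordinate `P - 1`, and positions outside `[1, n]` are dropped. -/
noncomputable def posExp (n : ℕ) : (ℕ → ℕ) →+ (Fin n →₀ ℕ) where
  toFun f := Finsupp.equivFunOnFinite.symm fun b => f (b + 1)
  map_zero' := by ext; simp
  map_add' _ _ := by ext; simp

def edge (j : ℕ) : ℕ → ℕ := Pi.single j 1 + Pi.single (j + 1) 1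

def weight (a ω j : ℕ) : ℕ := if j = a then ω else 1

def weightedEdge (a ω j : ℕ) : ℕ → ℕ := weight a ω j • edge j

def chain (l r : ℕ) : ℕ → ℕ := ∑ j ∈ Icc l r, edge j

def doubledEdges (l N : ℕ) : ℕ → ℕ := ∑ i ∈ range N, 2 • edge (l + 2 * i)

def leftPart (a c : ℕ) : ℕ → ℕ := Pi.single (a - 1) 1 + chain (a - c - 1) (a - 2)

def rightPart (a d : ℕ) : ℕ → ℕ := Pi.single (a + 2) 1 + chain (a + 2) (a + d + 1)

def hExp (a ω c d : ℕ) : ℕ → ℕ := ω • edge a + leftPart a c + rightPart a d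

def edgeSet (n a ω : ℕ) : Set (ℕ → ℕ) := weightedEdge a ω '' ↑(Icc 1 (n - 1))

def edgeSum (n a ω : ℕ) (m : ℕ → ℕ) : ℕ → ℕ :=
  ∑ j ∈ Icc 1 (n - 1), m j • weightedEdge a ω j

def partU (a c : ℕ) : Set ℕ :=
  {u | a - c - 2 ≤ u ∧ u ≤ a ∧ ∀ i, i ≤ (c + 1) / 2 → u ≠ a - 2 * i - 1}

def partV (a d : ℕ) : Set ℕ :=
  {v | a + 1 ≤ v ∧ v ≤ a + d + 3 ∧ ∀ i, i ≤ (d + 1) / 2 → v ≠ a + 2 * i + 2}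

def leftVars (a c : ℕ) : Set (ℕ → ℕ) :=
  (fun i => Pi.single (a - 2 * i - 1) 1) '' {i | i ≤ (c + 1) / 2}

def rightVars (a d : ℕ) : Set (ℕ → ℕ) :=
  (fun i => Pi.single (a + 2 * i + 2) 1) '' {i | i ≤ (d + 1) / 2}

def bipartiteEdges (a c d : ℕ) : Set (ℕ → ℕ) :=
  (fun uv : ℕ × ℕ => Pi.single uv.1 1 + Pi.single uv.2 1) '' (partU a c ×ˢ partV a d)

section Apply

variable {a ω c d : ℕ}

lemma edge_apply (j P : ℕ) :
    edge j P = (if P = j then 1 else 0) + (if P = j + 1 then 1 else 0) := by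
  simp [edge, Pi.single_apply]

lemma smul_edge_apply (w j P : ℕ) :
    (w • edge j) P = if P = j ∨ P = j + 1 then w else 0 := by
  rw [Pi.smul_apply, edge_apply, smul_eq_mul]
  split_ifs <;> omega

lemma chain_apply (l r P : ℕ) :
    chain l r P =
      (if l ≤ P ∧ P ≤ r then 1 else 0) + (if l + 1 ≤ P ∧ P ≤ r + 1 then 1 else 0) := by
  have hshift : ∑ j ∈ Icc l r, (Pi.single (j + 1) 1 : ℕ → ℕ) =
      ∑ j ∈ Icc (l + 1) (r + 1), Pi.single j 1 := by
    rw [← map_add_right_Icc l r 1, sum_map]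
    rfl
  rw [chain, show ∑ j ∈ Icc l r, edge j = _ from sum_add_distrib, hshift]
  simp only [Pi.add_apply, Finset.sum_apply, sum_pi_single, mem_Icc]

lemma doubledEdges_apply (l N P : ℕ) :
    doubledEdges l N P = if l ≤ P ∧ P < l + 2 * N then 2 else 0 := by
  induction N with
  | zero => simp [doubledEdges]
  | succ N ih =>
    rw [doubledEdges, sum_range_succ, ← doubledEdges, Pi.add_apply, ih, smul_edge_apply]
    split_ifs <;> omega

lemma leftPart_apply (hc : c + 2 ≤ a) (P : ℕ) :
    leftPart a c P = if a - c ≤ P ∧ P ≤ a - 1 then 2 else if P = a - c - 1 then 1 else 0 := by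
  simp only [leftPart, Pi.add_apply, chain_apply, Pi.single_apply]
  split_ifs <;> omega

lemma rightPart_apply (P : ℕ) :
    rightPart a d P =
      if a + 2 ≤ P ∧ P ≤ a + d + 1 then 2 else if P = a + d + 2 then 1 else 0 := by
  simp only [rightPart, Pi.add_apply, chain_apply, Pi.single_apply]
  split_ifs <;> omega

lemma hExp_apply (hc : c + 2 ≤ a) (P : ℕ) :
    hExp a ω c d P = (if P = a ∨ P = a + 1 then ω else 0) +
      (if a - c ≤ P ∧ P ≤ a - 1 then 2 else if P = a - c - 1 then 1 else 0) +
      (if a + 2 ≤ P ∧ P ≤ a + d + 1 then 2 else if P = a + d + 2 then 1 else 0) := by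
  rw [hExp, Pi.add_apply, Pi.add_apply, smul_edge_apply, leftPart_apply hc, rightPart_apply]

lemma edgeSum_apply {n : ℕ} {m : ℕ → ℕ} (hm : ∀ j ∉ Icc 1 (n - 1), m j = 0) {P : ℕ}
    (hP : 1 ≤ P) :
    edgeSum n a ω m P = m (P - 1) * weight a ω (P - 1) + m P * weight a ω P := by
  have hterm : ∀ j, (m j • weightedEdge a ω j) P =
      (if P - 1 = j then m j * weight a ω j else 0) +
        (if P = j then m j * weight a ω j else 0) := by
    intro j
    simp only [weightedEdge, Pi.smul_apply, edge_apply, smul_eq_mul]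
    split_ifs <;> first | omega | ring
  rw [edgeSum, Finset.sum_apply, sum_congr rfl fun j _ => hterm j, sum_add_distrib, sum_ite_eq,
    sum_ite_eq]
  split_ifs <;> simp [hm _, *]

lemma add_le_edgeSum {n : ℕ} (hω : 1 ≤ ω) {m : ℕ → ℕ}
    (hm : ∀ j ∉ Icc 1 (n - 1), m j = 0)
    {P : ℕ} (hP : 1 ≤ P) : m (P - 1) + m P ≤ edgeSum n a ω m P := by
  have le_mul_weight : ∀ k j, k ≤ k * weight a ω j := fun k j => by
    unfold weight
    split_ifs
    · exact Nat.le_mul_of_pos_right k hω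
    · rw [mul_one]
  rw [edgeSum_apply hm hP]
  exact add_le_add (le_mul_weight _ _) (le_mul_weight _ _)

lemma weightedEdge_le_tsub {x k : ℕ → ℕ} {j : ℕ} (h1 : weight a ω j + k j ≤ x j)
    (h2 : weight a ω j + k (j + 1) ≤ x (j + 1)) : weightedEdge a ω j ≤ x - k := by
  intro P
  simp only [weightedEdge, Pi.smul_apply, edge_apply, Pi.sub_apply, smul_eq_mul]
  split_ifs <;> subst_vars <;> omega

end Apply

section Polynomial

variable {n : ℕ} {K : Type*} [Field K]

@[simp] lemma posExp_apply (f : ℕ → ℕ) (b : Fin n) : posExp n f b = f (b + 1) := rfl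

lemma posExp_mono {f g : ℕ → ℕ} (h : f ≤ g) : posExp n f ≤ posExp n g :=
  fun b => h (b + 1)

lemma posExp_tsub (f g : ℕ → ℕ) : posExp n (f - g) = posExp n f - posExp n g := by
  ext; simp

lemma Xv_eq_monomial {i : ℕ} (h1 : 1 ≤ i) (h2 : i ≤ n) :
    Xv n K i = monomial (posExp n (Pi.single i 1)) 1 := by
  rw [Xv, dif_pos ⟨h1, h2⟩, X]
  refine congrArg (monomial · 1) (Finsupp.ext fun b => ?_)
  rw [posExp_apply, Finsupp.single_apply, Pi.single_apply]
  split_ifs with h h' h' <;> simp only [Fin.ext_iff] at h <;> omega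

lemma pu_pow_eq_monomial {j : ℕ} (h1 : 1 ≤ j) (h2 : j + 1 ≤ n) (w : ℕ) :
    pu n K j ^ w = monomial (posExp n (w • edge j)) 1 := by
  rw [pu, Xv_eq_monomial h1 (by omega), Xv_eq_monomial (by omega) h2, monomial_mul, one_mul,
    monomial_pow, one_pow, edge, map_nsmul, map_add]

lemma prod_pu_eq_monomial {l r : ℕ} (h1 : 1 ≤ l) (h2 : r + 1 ≤ n) :
    ∏ j ∈ Icc l r, pu n K j = monomial (posExp n (chain l r)) 1 := by
  rw [chain, map_sum, monomial_sum_one]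
  refine prod_congr rfl fun j hj => ?_
  rw [← pow_one (pu n K j), pu_pow_eq_monomial (by grind) (by grind), one_smul]

lemma monomial_hExp_eq {a ω c d : ℕ} (ha : c + 3 ≤ a) (hn : a + d + 3 ≤ n) :
    pu n K a ^ ω * Xv n K (a - 1) * Xv n K (a + 2) *
        (∏ i ∈ Icc (a - c - 1) (a - 2), pu n K i) *
        (∏ i ∈ Icc (a + 2) (a + d + 1), pu n K i) =
      monomial (posExp n (hExp a ω c d)) 1 := by
  rw [pu_pow_eq_monomial (by omega) (by omega), Xv_eq_monomial (by omega) (by omega),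
    Xv_eq_monomial (by omega) (by omega), prod_pu_eq_monomial (by omega) (by omega),
    prod_pu_eq_monomial (by omega) (by omega)]
  simp only [monomial_mul, one_mul, hExp, leftPart, rightPart, map_add]
  congr 2
  abel

lemma pathIdeal1_eq_span {a ω : ℕ} :
    pathIdeal1 n K a ω = Ideal.span ((fun s => monomial s 1) '' (posExp n '' edgeSet n a ω)) := by
  rw [pathIdeal1, edgeSet, Set.image_image, Set.image_image, coe_Icc]
  congr 1
  ext p
  simp only [Set.mem_ofPred_eq, Set.mem_image, Set.mem_Icc, and_assoc]
  refine exists_congr fun j => and_congr_right fun hj1 => and_congr_right fun hj2 => ?_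
  rw [weightedEdge, weight, pu_pow_eq_monomial hj1 (by omega), eq_comm]

lemma setOf_Xv_left_eq {a c : ℕ} (ha : c + 3 ≤ a) (hn : a ≤ n) :
    {p | ∃ i, i ≤ (c + 1) / 2 ∧ p = Xv n K (a - 2 * i - 1)} =
      (fun s => monomial s 1) '' (posExp n '' leftVars a c) := by
  rw [leftVars, Set.image_image, Set.image_image]
  ext p
  simp only [Set.mem_ofPred_eq, Set.mem_image]
  refine exists_congr fun i => and_congr_right fun hi => ?_
  rw [Xv_eq_monomial (by omega) (by omega), eq_comm]

lemma setOf_Xv_right_eq {a d : ℕ} (hn : a + d + 3 ≤ n) :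
    {p | ∃ i, i ≤ (d + 1) / 2 ∧ p = Xv n K (a + 2 * i + 2)} =
      (fun s => monomial s 1) '' (posExp n '' rightVars a d) := by
  rw [rightVars, Set.image_image, Set.image_image]
  ext p
  simp only [Set.mem_ofPred_eq, Set.mem_image]
  refine exists_congr fun i => and_congr_right fun hi => ?_
  rw [Xv_eq_monomial (by omega) (by omega), eq_comm]

lemma setOf_Xv_mul_Xv_eq {a c d : ℕ} (ha : c + 3 ≤ a) (hn : a + d + 3 ≤ n) :
    {p | ∃ u v : ℕ,
        (a - c - 2 ≤ u ∧ u ≤ a ∧ ∀ i, i ≤ (c + 1) / 2 → u ≠ a - 2 * i - 1) ∧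
        (a + 1 ≤ v ∧ v ≤ a + d + 3 ∧ ∀ i, i ≤ (d + 1) / 2 → v ≠ a + 2 * i + 2) ∧
        p = Xv n K u * Xv n K v} =
      (fun s => monomial s 1) '' (posExp n '' bipartiteEdges a c d) := by
  rw [bipartiteEdges, Set.image_image, Set.image_image]
  ext p
  simp only [Set.mem_ofPred_eq, Set.mem_image, Set.mem_prod, Prod.exists]
  refine exists_congr fun u => exists_congr fun v => ?_
  refine Iff.trans ?_ and_assoc.symm
  refine and_congr_right fun hu => and_congr_right fun hv => ?_
  rw [Xv_eq_monomial (by grind [partU]) (by grind [partU]),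
    Xv_eq_monomial (by grind [partV]) (by grind [partV]), monomial_mul, one_mul, map_add,
    eq_comm]

lemma image_tsub_image_posExp (S : Set (ℕ → ℕ)) (k : ℕ → ℕ) :
    (· - posExp n k) '' (posExp n '' S) = posExp n '' ((· - k) '' S) := by
  simp only [Set.image_image, posExp_tsub]

lemma span_image_posExp_le {A B : Set (ℕ → ℕ)} (h : ∀ f ∈ A, ∃ g ∈ B, g ≤ f) :
    Ideal.span ((fun s => monomial s (1 : K)) '' (posExp n '' A)) ≤
      Ideal.span ((fun s => monomial s (1 : K)) '' (posExp n '' B)) := by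
  refine span_monomial_one_le_of_forall_exists_le ?_
  rintro _ ⟨f, hf, rfl⟩
  obtain ⟨g, hg, hle⟩ := h f hf
  exact ⟨_, ⟨g, hg, rfl⟩, posExp_mono hle⟩

end Polynomial

section Witnesses

variable {n a ω c d : ℕ}

lemma edge_mem_edgeSet {j : ℕ} (h1 : 1 ≤ j) (h2 : j + 1 ≤ n) (hja : j ≠ a) :
    edge j ∈ edgeSet n a ω :=
  ⟨j, by simp only [coe_Icc, Set.mem_Icc]; omega,
    by rw [weightedEdge, weight, if_neg hja, one_smul]⟩

lemma smul_edge_mem_edgeSet (h1 : 1 ≤ a) (h2 : a + 1 ≤ n) : ω • edge a ∈ edgeSet n a ω :=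
  ⟨a, by simp only [coe_Icc, Set.mem_Icc]; omega, by rw [weightedEdge, weight, if_pos rfl]⟩

lemma chain_mem_nsmul_edgeSet {l r : ℕ} (hl : 1 ≤ l) (hr : r + 1 ≤ n) (ha : r < a ∨ a < l) :
    chain l r ∈ (r + 1 - l) • edgeSet n a ω := by
  rw [← Nat.card_Icc]
  exact Set.sum_mem_card_nsmul _ fun j hj => edge_mem_edgeSet (by grind) (by grind) (by grind)

lemma doubledEdges_mem_nsmul_edgeSet {l N : ℕ} (hl : 1 ≤ l) (hN : l + 2 * N ≤ n)
    (ha : a < l ∨ l + 2 * N ≤ a + 1) : doubledEdges l N ∈ (2 * N) • edgeSet n a ω := by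
  have := Set.sum_mem_card_nsmul (range N) (f := fun i => 2 • edge (l + 2 * i))
    (A := 2 • edgeSet n a ω) fun i hi =>
      Set.nsmul_mem_nsmul (edge_mem_edgeSet (by omega) (by grind) (by grind))
  rwa [card_range, ← mul_nsmul] at this

/- `leftPart + x_u` is re-paired into `c + 1` edges: the path from `a - c - 1` to `u`, then the
doubled edges `u_u², u_{u+2}², …, u_{a-2}²` (`u ≡ a mod 2`); for `u = a - c - 2` the path is
replaced by the edge `u_{a-c-2}`. The other three witness lemmas are built alike. -/
lemma exists_le_leftPart_add_single_of_mem_partU (hc : c + 3 ≤ a) (hn : a + 1 ≤ n) {u : ℕ}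
    (hu : u ∈ partU a c) :
    ∃ y ∈ (c + 1) • edgeSet n a ω, y ≤ leftPart a c + Pi.single u 1 := by
  obtain ⟨hu1, hu2, hu3⟩ := hu
  have hpar : u % 2 = a % 2 := by
    by_contra h
    exact hu3 ((a - u - 1) / 2) (by omega) (by omega)
  by_cases hu0 : u = a - c - 2
  · refine ⟨edge (a - c - 2) + doubledEdges (a - c) (c / 2),
      Set.add_mem_nsmul (Set.mem_one_nsmul (edge_mem_edgeSet (by omega) (by omega) (by omega)))
        (doubledEdges_mem_nsmul_edgeSet (by omega) (by omega) (by omega)) (by omega),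
      fun P => ?_⟩
    simp only [Pi.add_apply, edge_apply, doubledEdges_apply,
      leftPart_apply (by omega : c + 2 ≤ a), Pi.single_apply]
    split_ifs <;> omega
  · refine ⟨chain (a - c - 1) (u - 1) + doubledEdges u ((a - u) / 2),
      Set.add_mem_nsmul (chain_mem_nsmul_edgeSet (by omega) (by omega) (by omega))
        (doubledEdges_mem_nsmul_edgeSet (by omega) (by omega) (by omega)) (by omega),
      fun P => ?_⟩
    simp only [Pi.add_apply, chain_apply, doubledEdges_apply,
      leftPart_apply (by omega : c + 2 ≤ a), Pi.single_apply]
    split_ifs <;> omega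

lemma exists_le_leftPart_add_single_add_two_single (hc : c + 3 ≤ a) (hn : a + 1 ≤ n) {i : ℕ}
    (hi : i ≤ (c + 1) / 2) :
    ∃ y ∈ (c + 2) • edgeSet n a ω,
      y ≤ leftPart a c + Pi.single (a - 2 * i - 1) 1 + 2 • Pi.single a 1 := by
  by_cases hi0 : 2 * i = c + 1
  · refine ⟨edge (a - c - 2) + doubledEdges (a - c) ((c + 1) / 2),
      Set.add_mem_nsmul (Set.mem_one_nsmul (edge_mem_edgeSet (by omega) (by omega) (by omega)))
        (doubledEdges_mem_nsmul_edgeSet (by omega) (by omega) (by omega)) (by omega),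
      fun P => ?_⟩
    simp only [Pi.add_apply, Pi.smul_apply, smul_eq_mul, edge_apply, doubledEdges_apply,
      leftPart_apply (by omega : c + 2 ≤ a), Pi.single_apply]
    split_ifs <;> omega
  · refine ⟨chain (a - c - 1) (a - 2 * i - 2) + doubledEdges (a - 2 * i - 1) (i + 1),
      Set.add_mem_nsmul (chain_mem_nsmul_edgeSet (by omega) (by omega) (by omega))
        (doubledEdges_mem_nsmul_edgeSet (by omega) (by omega) (by omega)) (by omega),
      fun P => ?_⟩
    simp only [Pi.add_apply, Pi.smul_apply, smul_eq_mul, chain_apply, doubledEdges_apply,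
      leftPart_apply (by omega : c + 2 ≤ a), Pi.single_apply]
    split_ifs <;> omega

lemma exists_le_rightPart_add_single_of_mem_partV (hn : a + d + 3 ≤ n) {v : ℕ}
    (hv : v ∈ partV a d) :
    ∃ y ∈ (d + 1) • edgeSet n a ω, y ≤ rightPart a d + Pi.single v 1 := by
  obtain ⟨hv1, hv2, hv3⟩ := hv
  have hpar : v % 2 ≠ a % 2 := by
    intro h
    exact hv3 ((v - a - 2) / 2) (by omega) (by omega)
  by_cases hv0 : v = a + d + 3
  · refine ⟨doubledEdges (a + 2) (d / 2) + edge (a + d + 2),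
      Set.add_mem_nsmul (doubledEdges_mem_nsmul_edgeSet (by omega) (by omega) (by omega))
        (Set.mem_one_nsmul (edge_mem_edgeSet (by omega) (by omega) (by omega))) (by omega),
      fun P => ?_⟩
    simp only [Pi.add_apply, edge_apply, doubledEdges_apply, rightPart_apply, Pi.single_apply]
    split_ifs <;> omega
  · refine ⟨doubledEdges (a + 2) ((v - a - 1) / 2) + chain v (a + d + 1),
      Set.add_mem_nsmul (doubledEdges_mem_nsmul_edgeSet (by omega) (by omega) (by omega))
        (chain_mem_nsmul_edgeSet (by omega) (by omega) (by omega)) (by omega),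
      fun P => ?_⟩
    simp only [Pi.add_apply, chain_apply, doubledEdges_apply, rightPart_apply, Pi.single_apply]
    split_ifs <;> omega

lemma exists_le_rightPart_add_single_add_two_single (hn : a + d + 3 ≤ n) {i : ℕ}
    (hi : i ≤ (d + 1) / 2) :
    ∃ y ∈ (d + 2) • edgeSet n a ω,
      y ≤ rightPart a d + Pi.single (a + 2 * i + 2) 1 + 2 • Pi.single (a + 1) 1 := by
  by_cases hi0 : 2 * i = d + 1
  · refine ⟨doubledEdges (a + 1) ((d + 1) / 2) + edge (a + d + 2),
      Set.add_mem_nsmul (doubledEdges_mem_nsmul_edgeSet (by omega) (by omega) (by omega))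
        (Set.mem_one_nsmul (edge_mem_edgeSet (by omega) (by omega) (by omega))) (by omega),
      fun P => ?_⟩
    simp only [Pi.add_apply, Pi.smul_apply, smul_eq_mul, edge_apply, doubledEdges_apply,
      rightPart_apply, Pi.single_apply]
    split_ifs <;> omega
  · refine ⟨doubledEdges (a + 1) (i + 1) + chain (a + 2 * i + 2) (a + d + 1),
      Set.add_mem_nsmul (doubledEdges_mem_nsmul_edgeSet (by omega) (by omega) (by omega))
        (chain_mem_nsmul_edgeSet (by omega) (by omega) (by omega)) (by omega),
      fun P => ?_⟩
    simp only [Pi.add_apply, Pi.smul_apply, smul_eq_mul, chain_apply, doubledEdges_apply,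
      rightPart_apply, Pi.single_apply]
    split_ifs <;> omega

lemma two_single_add_two_single_le (hω : 2 ≤ ω) :
    2 • Pi.single a 1 + 2 • Pi.single (a + 1) 1 ≤ ω • edge a := by
  intro P
  rw [smul_edge_apply]
  simp only [Pi.add_apply, Pi.smul_apply, smul_eq_mul, Pi.single_apply]
  split_ifs <;> omega

lemma exists_mem_nsmul_le_add_hExp (hω : 2 ≤ ω) (ha : c + 3 ≤ a) (hn : a + d + 3 ≤ n)
    {g : ℕ → ℕ}
    (hg : g ∈ edgeSet n a ω ∪ leftVars a c ∪ rightVars a d ∪ bipartiteEdges a c d) :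
    ∃ y ∈ (c + d + 3) • edgeSet n a ω, y ≤ g + hExp a ω c d := by
  have hmid := two_single_add_two_single_le (a := a) hω
  obtain ⟨yL, hyL, hL⟩ :=
    exists_le_leftPart_add_single_of_mem_partU (n := n) (ω := ω) ha (by omega) (u := a)
    ⟨by omega, le_rfl, fun i _ => by omega⟩
  obtain ⟨yR, hyR, hR⟩ :=
    exists_le_rightPart_add_single_of_mem_partV (ω := ω) hn (v := a + 1)
    ⟨le_rfl, by omega, fun i _ => by omega⟩
  rcases hg with
    ((⟨j, hj, rfl⟩ | ⟨i, hi, rfl⟩) | ⟨i, hi, rfl⟩) | ⟨⟨u, v⟩, ⟨hu, hv⟩, rfl⟩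
  · refine ⟨weightedEdge a ω j + yL + yR, Set.add_mem_nsmul (Set.add_mem_nsmul
      (Set.mem_one_nsmul ⟨j, hj, rfl⟩) hyL rfl) hyR (by omega), fun P => ?_⟩
    have h1 := hL P
    have h2 := hR P
    have h3 := hmid P
    simp only [hExp, Pi.add_apply, Pi.smul_apply, smul_eq_mul] at h1 h2 h3 ⊢
    omega
  · obtain ⟨y, hy, hle⟩ :=
      exists_le_leftPart_add_single_add_two_single (n := n) (ω := ω) ha (by omega) hi
    refine ⟨y + yR, Set.add_mem_nsmul hy hyR (by omega), fun P => ?_⟩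
    have h1 := hle P
    have h2 := hR P
    have h3 := hmid P
    simp only [hExp, Pi.add_apply, Pi.smul_apply, smul_eq_mul] at h1 h2 h3 ⊢
    omega
  · obtain ⟨y, hy, hle⟩ :=
      exists_le_rightPart_add_single_add_two_single (ω := ω) hn hi
    refine ⟨yL + y, Set.add_mem_nsmul hyL hy (by omega), fun P => ?_⟩
    have h1 := hL P
    have h2 := hle P
    have h3 := hmid P
    simp only [hExp, Pi.add_apply, Pi.smul_apply, smul_eq_mul] at h1 h2 h3 ⊢
    omega
  · obtain ⟨yu, hyu, hu'⟩ :=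
      exists_le_leftPart_add_single_of_mem_partU (n := n) (ω := ω) ha (by omega) hu
    obtain ⟨yv, hyv, hv'⟩ := exists_le_rightPart_add_single_of_mem_partV (ω := ω) hn hv
    refine ⟨ω • edge a + yu + yv, Set.add_mem_nsmul (Set.add_mem_nsmul
      (Set.mem_one_nsmul (smul_edge_mem_edgeSet (by omega) (by omega))) hyu rfl) hyv (by omega),
      fun P => ?_⟩
    have h1 := hu' P
    have h2 := hv' P
    simp only [hExp, Pi.add_apply, Pi.smul_apply, smul_eq_mul] at h1 h2 ⊢
    omega

end Witnesses

section Domination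

variable {n a ω c d : ℕ} {m : ℕ → ℕ}

lemma weightedEdge_le_edgeSum_sub_of_outside (hω : 1 ≤ ω) (ha : c + 3 ≤ a)
    (hm : ∀ j ∉ Icc 1 (n - 1), m j = 0) {j : ℕ} (hj : 1 ≤ j) (hmj : m j ≠ 0)
    (hout : j + 3 ≤ a - c ∨ a + d + 3 ≤ j) :
    weightedEdge a ω j ≤ edgeSum n a ω m - hExp a ω c d := by
  have hw : weight a ω j = 1 := if_neg (by omega)
  have h1 := add_le_edgeSum (a := a) hω hm (P := j) hj
  have h2 := add_le_edgeSum (a := a) hω hm (P := j + 1) (by omega)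
  rw [Nat.add_sub_cancel] at h2
  refine weightedEdge_le_tsub ?_ ?_ <;> rw [hw, hExp_apply (by omega)] <;> split_ifs <;> omega

lemma weightedEdge_le_edgeSum_sub_of_two_le (ha : c + 3 ≤ a)
    (hm : ∀ j ∉ Icc 1 (n - 1), m j = 0) (hma : 2 ≤ m a) :
    weightedEdge a ω a ≤ edgeSum n a ω m - hExp a ω c d := by
  have hwa : weight a ω a = ω := if_pos rfl
  have hlow : 2 * ω ≤ m a * ω := Nat.mul_le_mul_right ω hma
  have h1 := edgeSum_apply (a := a) (ω := ω) hm (P := a) (by omega)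
  have h2 := edgeSum_apply (a := a) (ω := ω) hm (P := a + 1) (by omega)
  rw [hwa] at h1
  rw [Nat.add_sub_cancel, hwa] at h2
  refine weightedEdge_le_tsub ?_ ?_ <;> rw [hwa, hExp_apply (by omega)] <;> split_ifs <;> omega

/- Left of `a`, `hExp` is at most the exponent of the path `u_{a-c-1} ⋯ u_{a-1}`, which has
only `c + 1` edges. The next three lemmas run the same comparison on the other windows. -/
lemma exists_leftVar_lt_edgeSum (hω : 1 ≤ ω) (ha : c + 3 ≤ a)
    (hm : ∀ j ∉ Icc 1 (n - 1), m j = 0) (hp : c + 2 ≤ ∑ j ∈ Ico (a - c - 2) a, m j) :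
    ∃ x, Pi.single x 1 ∈ leftVars a c ∧ hExp a ω c d x < edgeSum n a ω m x := by
  set N := (c + 3) / 2 with hN
  obtain ⟨i, hi, hlt⟩ := exists_pair_lt_of_sum_Ico_lt (L := a - 2 * N) (N := N) (m := m)
    (μ := fun j => if a - c - 1 ≤ j ∧ j ≤ a - 1 then 1 else 0) <| by
      calc _ ≤ a - 1 + 1 - (a - c - 1) := sum_ite_mem_Icc_le _ _ _
        _ < ∑ j ∈ Ico (a - c - 2) a, m j := by omega
        _ ≤ _ := sum_le_sum_of_subset (Ico_subset_Ico (by omega) (by omega))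
  have hx := add_le_edgeSum (a := a) (ω := ω) hω hm (P := a - 2 * N + 2 * i + 1) (by omega)
  refine ⟨a - 2 * N + 2 * i + 1,
    ⟨N - 1 - i, by simp only [Set.mem_ofPred_eq]; omega, ?_⟩, ?_⟩
  · dsimp only
    congr 1
    omega
  · rw [Nat.add_sub_cancel] at hx
    rw [hExp_apply (by omega)]
    split_ifs at hlt ⊢ <;> omega

lemma exists_rightVar_lt_edgeSum (hω : 1 ≤ ω) (ha : c + 3 ≤ a)
    (hm : ∀ j ∉ Icc 1 (n - 1), m j = 0)
    (hq : d + 2 ≤ ∑ j ∈ Ico (a + 1) (a + d + 3), m j) :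
    ∃ y, Pi.single y 1 ∈ rightVars a d ∧ hExp a ω c d y < edgeSum n a ω m y := by
  set N := (d + 3) / 2 with hN
  obtain ⟨i, hi, hlt⟩ := exists_pair_lt_of_sum_Ico_lt (L := a + 1) (N := N) (m := m)
    (μ := fun j => if a + 1 ≤ j ∧ j ≤ a + d + 1 then 1 else 0) <| by
      calc _ ≤ a + d + 1 + 1 - (a + 1) := sum_ite_mem_Icc_le _ _ _
        _ < ∑ j ∈ Ico (a + 1) (a + d + 3), m j := by omega
        _ ≤ _ := sum_le_sum_of_subset (Ico_subset_Ico le_rfl (by omega))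
  have hy := add_le_edgeSum (a := a) (ω := ω) hω hm (P := a + 1 + 2 * i + 1) (by omega)
  refine ⟨a + 1 + 2 * i + 1, ⟨i, by simp only [Set.mem_ofPred_eq]; omega, ?_⟩, ?_⟩
  · dsimp only
    congr 1
    omega
  · rw [Nat.add_sub_cancel] at hy
    rw [hExp_apply (by omega)]
    split_ifs at hlt ⊢ <;> omega

lemma exists_partU_lt_edgeSum (hω : 1 ≤ ω) (ha : c + 3 ≤ a)
    (hm : ∀ j ∉ Icc 1 (n - 1), m j = 0) (hma : m a = 1)
    (hp : c + 1 ≤ ∑ j ∈ Ico (a - c - 2) a, m j) :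
    ∃ u ∈ partU a c, hExp a ω c d u < edgeSum n a ω m u := by
  by_cases hm1 : m (a - 1) = 0
  · have hsplit : ∑ j ∈ Ico (a - c - 2) a, m j =
        ∑ j ∈ Ico (a - c - 2) (a - 1), m j + m (a - 1) := by
      rw [← sum_Ico_succ_top (by omega), Nat.sub_add_cancel (by omega)]
    set N := (c + 2) / 2 with hN
    obtain ⟨i, hi, hlt⟩ := exists_pair_lt_of_sum_Ico_lt (L := a - 1 - 2 * N) (N := N) (m := m)
      (μ := fun j => if a - c - 1 ≤ j ∧ j ≤ a - 2 then 1 else 0) <| by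
        calc _ ≤ a - 2 + 1 - (a - c - 1) := sum_ite_mem_Icc_le _ _ _
          _ < ∑ j ∈ Ico (a - c - 2) (a - 1), m j := by omega
          _ ≤ _ := sum_le_sum_of_subset (Ico_subset_Ico (by omega) (by omega))
    have hu := add_le_edgeSum (a := a) (ω := ω) hω hm (P := a - 1 - 2 * N + 2 * i + 1) (by omega)
    refine ⟨a - 1 - 2 * N + 2 * i + 1, ⟨by omega, by omega, fun i _ => by omega⟩, ?_⟩
    rw [Nat.add_sub_cancel] at hu
    rw [hExp_apply (by omega)]
    split_ifs at hlt ⊢ <;> omega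
  · refine ⟨a, ⟨by omega, le_rfl, fun i _ => by omega⟩, ?_⟩
    have hxa := edgeSum_apply (a := a) (ω := ω) hm (P := a) (by omega)
    rw [hma, one_mul, show weight a ω (a - 1) = 1 from if_neg (by omega),
      show weight a ω a = ω from if_pos rfl] at hxa
    rw [hExp_apply (by omega)]
    split_ifs <;> omega

lemma exists_partV_lt_edgeSum (hω : 1 ≤ ω) (ha : c + 3 ≤ a)
    (hm : ∀ j ∉ Icc 1 (n - 1), m j = 0) (hma : m a = 1)
    (hq : d + 1 ≤ ∑ j ∈ Ico (a + 1) (a + d + 3), m j) :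
    ∃ v ∈ partV a d, hExp a ω c d v < edgeSum n a ω m v := by
  by_cases hm1 : m (a + 1) = 0
  · have hsplit : ∑ j ∈ Ico (a + 1) (a + d + 3), m j =
        m (a + 1) + ∑ j ∈ Ico (a + 2) (a + d + 3), m j :=
      sum_eq_sum_Ico_succ_bot (by omega) m
    set N := (d + 2) / 2 with hN
    obtain ⟨i, hi, hlt⟩ := exists_pair_lt_of_sum_Ico_lt (L := a + 2) (N := N) (m := m)
      (μ := fun j => if a + 2 ≤ j ∧ j ≤ a + d + 1 then 1 else 0) <| by
        calc _ ≤ a + d + 1 + 1 - (a + 2) := sum_ite_mem_Icc_le _ _ _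
          _ < ∑ j ∈ Ico (a + 2) (a + d + 3), m j := by omega
          _ ≤ _ := sum_le_sum_of_subset (Ico_subset_Ico le_rfl (by omega))
    have hv := add_le_edgeSum (a := a) (ω := ω) hω hm (P := a + 2 + 2 * i + 1) (by omega)
    refine ⟨a + 2 + 2 * i + 1, ⟨by omega, by omega, fun i _ => by omega⟩, ?_⟩
    rw [Nat.add_sub_cancel] at hv
    rw [hExp_apply (by omega)]
    split_ifs at hlt ⊢ <;> omega
  · refine ⟨a + 1, ⟨le_rfl, by omega, fun i _ => by omega⟩, ?_⟩
    have hxa := edgeSum_apply (a := a) (ω := ω) hm (P := a + 1) (by omega)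
    rw [Nat.add_sub_cancel, hma, one_mul, show weight a ω a = ω from if_pos rfl,
      show weight a ω (a + 1) = 1 from if_neg (by omega)] at hxa
    rw [hExp_apply (by omega)]
    split_ifs <;> omega

lemma sum_Icc_eq_left_add_add_right (ha : c + 3 ≤ a) (hn : a + d + 3 ≤ n)
    (hout : ∀ j ∈ Icc 1 (n - 1), m j ≠ 0 → a - c < j + 3 ∧ j < a + d + 3) :
    ∑ j ∈ Icc 1 (n - 1), m j =
      ∑ j ∈ Ico (a - c - 2) a, m j + m a + ∑ j ∈ Ico (a + 1) (a + d + 3), m j := by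
  rw [← sum_Ico_eq_add_add m (by omega) (by omega)]
  refine (sum_subset (fun j hj => ?_) fun j hj hj' => ?_).symm
  · simp only [mem_Ico, mem_Icc] at hj ⊢
    omega
  · by_contra hmj
    have := hout j hj hmj
    simp only [mem_Ico, mem_Icc] at hj hj'
    omega

lemma exists_le_edgeSum_sub_hExp (hω : 2 ≤ ω) (ha : c + 3 ≤ a) (hn : a + d + 3 ≤ n)
    (hm : ∀ j ∉ Icc 1 (n - 1), m j = 0) (htot : ∑ j ∈ Icc 1 (n - 1), m j = c + d + 3) :
    ∃ g ∈ edgeSet n a ω ∪ leftVars a c ∪ rightVars a d ∪ bipartiteEdges a c d,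
      g ≤ edgeSum n a ω m - hExp a ω c d := by
  by_cases hout : ∃ j ∈ Icc 1 (n - 1), m j ≠ 0 ∧ (j + 3 ≤ a - c ∨ a + d + 3 ≤ j)
  · obtain ⟨j, hj, hmj, hjout⟩ := hout
    exact ⟨_, .inl (.inl (.inl ⟨j, hj, rfl⟩)),
      weightedEdge_le_edgeSum_sub_of_outside (by omega) ha hm (mem_Icc.mp hj).1 hmj hjout⟩
  push Not at hout
  by_cases hma : 2 ≤ m a
  · exact ⟨_, .inl (.inl (.inl ⟨a, by simp only [coe_Icc, Set.mem_Icc]; omega, rfl⟩)),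
      weightedEdge_le_edgeSum_sub_of_two_le ha hm hma⟩
  rw [sum_Icc_eq_left_add_add_right ha hn hout] at htot
  by_cases hp : c + 2 ≤ ∑ j ∈ Ico (a - c - 2) a, m j
  · obtain ⟨x, hx, hlt⟩ := exists_leftVar_lt_edgeSum (ω := ω) (d := d) (by omega) ha hm hp
    exact ⟨_, .inl (.inl (.inr hx)), Pi.single_one_le_tsub hlt⟩
  by_cases hq : d + 2 ≤ ∑ j ∈ Ico (a + 1) (a + d + 3), m j
  · obtain ⟨y, hy, hlt⟩ := exists_rightVar_lt_edgeSum (ω := ω) (c := c) (by omega) ha hm hq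
    exact ⟨_, .inl (.inr hy), Pi.single_one_le_tsub hlt⟩
  obtain ⟨u, hu, hku⟩ :=
    exists_partU_lt_edgeSum (ω := ω) (d := d) (by omega) ha hm (by omega) (by omega)
  obtain ⟨v, hv, hkv⟩ :=
    exists_partV_lt_edgeSum (ω := ω) (c := c) (d := d) (by omega) ha hm (by omega) (by omega)
  exact ⟨_, .inr ⟨(u, v), ⟨hu, hv⟩, rfl⟩,
    Pi.single_one_add_single_one_le_tsub (by have := hu.2.1; have := hv.1; omega) hku hkv⟩

end Domination

end OneWeightPath

open OneWeightPath

theorem colon_h_one_weight_general (n : ℕ) (K : Type*) [Field K] (a ω t c d : ℕ)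
    (ha1 : 3 ≤ a) (ha2 : a ≤ n / 2) (hω : 1 < ω)
    (ht1 : 3 ≤ t)
    (hcd : t - 3 = c + d) (hc : c ≤ a - 3) (hd : d ≤ n - a - 3) :
    (pathIdeal1 n K a ω ^ t).colon
        (Ideal.span {pu n K a ^ ω * Xv n K (a - 1) * Xv n K (a + 2) *
          (∏ i ∈ Icc (a - c - 1) (a - 2), pu n K i) *
          (∏ i ∈ Icc (a + 2) (a + d + 1), pu n K i)}) =
      pathIdeal1 n K a ω ⊔
        Ideal.span {p | ∃ i, i ≤ (c + 1) / 2 ∧ p = Xv n K (a - 2 * i - 1)} ⊔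
        Ideal.span {p | ∃ i, i ≤ (d + 1) / 2 ∧ p = Xv n K (a + 2 * i + 2)} ⊔
        Ideal.span {p | ∃ u v : ℕ,
          (a - c - 2 ≤ u ∧ u ≤ a ∧ ∀ i, i ≤ (c + 1) / 2 → u ≠ a - 2 * i - 1) ∧
          (a + 1 ≤ v ∧ v ≤ a + d + 3 ∧ ∀ i, i ≤ (d + 1) / 2 → v ≠ a + 2 * i + 2) ∧
          p = Xv n K u * Xv n K v} := by
  obtain rfl : t = c + d + 3 := by omega
  have hca : c + 3 ≤ a := by omega
  have hdn : a + d + 3 ≤ n := by omega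
  rw [pathIdeal1_eq_span, span_monomial_one_pow, ← Set.image_nsmul, monomial_hExp_eq hca hdn,
    colon_span_monomial_one, image_tsub_image_posExp, setOf_Xv_left_eq hca (by omega),
    setOf_Xv_right_eq hdn, setOf_Xv_mul_Xv_eq hca hdn]
  simp only [← Ideal.span_union, ← Set.image_union]
  refine le_antisymm (span_image_posExp_le ?_) (span_image_posExp_le ?_)
  · rintro _ ⟨_, hx, rfl⟩
    obtain ⟨m, hm, htot, rfl⟩ := Set.exists_sum_nsmul_of_mem_nsmul_image hx
    exact exists_le_edgeSum_sub_hExp hω hca hdn hm htot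
  · intro g hg
    obtain ⟨y, hy, hle⟩ := exists_mem_nsmul_le_add_hExp hω hca hdn hg
    exact ⟨y - hExp a ω c d, ⟨y, hy, rfl⟩, tsub_le_iff_right.mpr hle⟩

/-- With `n ≥ 6`, `3 ≤ a ≤ ⌊n/2⌋`, `ω > 1`, `3 ≤ t ≤ n - 3`,
`t - 3 = c + d` with `0 ≤ c ≤ a - 3`, `0 ≤ d ≤ n - a - 3`, and
`h = u_a^ω x_{a-1} x_{a+2} (∏_{i=a-c-1}^{a-2} u_i)(∏_{i=a+2}^{a+d+1} u_i)`, one has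
`I^t : h = I + (x_{a-2i-1} : 0 ≤ i ≤ ⌈c/2⌉) + (x_{a+2i+2} : 0 ≤ i ≤ ⌈d/2⌉) + I(K_{U,V})`,
where `U = {x_{a-c-2},…,x_a} \ {x_{a-2i-1}}` and `V = {x_{a+1},…,x_{a+d+3}} \ {x_{a+2i+2}}`. -/
theorem colon_h_one_weight (n : ℕ) (K : Type*) [Field K] (a ω t c d : ℕ)
    (hn : 6 ≤ n) (ha1 : 3 ≤ a) (ha2 : a ≤ n / 2) (hω : 1 < ω)
    (ht1 : 3 ≤ t) (ht2 : t ≤ n - 3)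
    (hcd : t - 3 = c + d) (hc : c ≤ a - 3) (hd : d ≤ n - a - 3) :
    (pathIdeal1 n K a ω ^ t).colon
        (Ideal.span {pu n K a ^ ω * Xv n K (a - 1) * Xv n K (a + 2) *
          (∏ i ∈ Icc (a - c - 1) (a - 2), pu n K i) *
          (∏ i ∈ Icc (a + 2) (a + d + 1), pu n K i)}) =
      pathIdeal1 n K a ω ⊔
        Ideal.span {p | ∃ i, i ≤ (c + 1) / 2 ∧ p = Xv n K (a - 2 * i - 1)} ⊔
        Ideal.span {p | ∃ i, i ≤ (d + 1) / 2 ∧ p = Xv n K (a + 2 * i + 2)} ⊔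
        Ideal.span {p | ∃ u v : ℕ,
          (a - c - 2 ≤ u ∧ u ≤ a ∧ ∀ i, i ≤ (c + 1) / 2 → u ≠ a - 2 * i - 1) ∧
          (a + 1 ≤ v ∧ v ≤ a + d + 3 ∧ ∀ i, i ≤ (d + 1) / 2 → v ≠ a + 2 * i + 2) ∧
          p = Xv n K u * Xv n K v} :=
  colon_h_one_weight_general n K a ω t c d ha1 ha2 hω ht1 hcd hc hd
end

section
/- Let w = (w_1, ..., w_{n-1}) be a sequence of positive integers and I(P(w)) = ((x_1x_2)^{w_1}, ..., (x_{n-1}x_n)^{w_{n-1}}) ⊂ S = K[x_1,...,x_n]. Then I(P(w)) is integrally closed if and only if w has at most two entries greater than 1, and if it has exactly two entries greater than 1, they occur in positions a and a+2 for some a. -/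
open MvPolynomial Finset

/-- An ideal is integrally closed if every element integral over it (i.e. satisfying an
equation `z^m + c_1 z^{m-1} + ⋯ + c_m = 0` with `c_i ∈ I^i`) already lies in it. -/
def IsIntegrallyClosedIdeal {R : Type*} [CommRing R] (I : Ideal R) : Prop :=
  ∀ z : R, (∃ m : ℕ, 0 < m ∧ ∃ c : ℕ → R, (∀ i, c i ∈ I ^ i) ∧
    z ^ m + ∑ i ∈ Finset.range m, c (i + 1) * z ^ (m - 1 - i) = 0) → z ∈ I

/-- The edge ideal `I(P(w)) = ((x_1x_2)^{w_1},…,(x_{n-1}x_n)^{w_{n-1}})` of the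
edge-weighted path with weight sequence `w`. -/
noncomputable def pathIdealW (n : ℕ) (K : Type*) [Field K] (w : ℕ → ℕ) :
    Ideal (MvPolynomial (Fin n) K) :=
  Ideal.span {p | ∃ j, 1 ≤ j ∧ j ≤ n - 1 ∧ p = pu n K j ^ w j}

noncomputable def vexp (n : ℕ) (w : ℕ → ℕ) (j : ℕ) : Fin n →₀ ℕ :=
  if h : 1 ≤ j ∧ j + 1 ≤ n then
    w j • (Finsupp.single ⟨j - 1, by omega⟩ 1 + Finsupp.single ⟨j, by omega⟩ 1) else 0

lemma vexp_apply (n : ℕ) (w : ℕ → ℕ) (j : ℕ) (h1 : 1 ≤ j) (h2 : j + 1 ≤ n) (t : Fin n) :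
    vexp n w j t = if t.val = j - 1 ∨ t.val = j then w j else 0 := by
  rw [vexp, dif_pos ⟨h1, h2⟩]
  simp only [Finsupp.smul_apply, Finsupp.add_apply, Finsupp.single_apply, Fin.ext_iff]
  have e1 : ¬ (j = j - 1) := by omega
  have e2 : ¬ ((j:ℕ) - 1 = j) := by omega
  rcases eq_or_ne t.val (j-1) with h | h <;> rcases eq_or_ne t.val j with h' | h' <;>
    simp [h, h', e1, e2] <;> omega

lemma pu_pow_eq (n : ℕ) (K : Type*) [Field K] (w : ℕ → ℕ) (j : ℕ)
    (h1 : 1 ≤ j) (h2 : j + 1 ≤ n) :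
    pu n K j ^ w j = monomial (vexp n w j) 1 := by
  have hb : 1 ≤ j ∧ j ≤ n := ⟨h1, by omega⟩
  have hb' : 1 ≤ j + 1 ∧ j + 1 ≤ n := ⟨by omega, h2⟩
  rw [pu, Xv, Xv, dif_pos hb, dif_pos hb', vexp, dif_pos ⟨h1, h2⟩]
  have : (⟨j + 1 - 1, by omega⟩ : Fin n) = ⟨j, by omega⟩ := by simp
  rw [this]
  rw [X, X, monomial_mul, monomial_pow]
  simp

lemma pathIdealW_eq (n : ℕ) (K : Type*) [Field K] (w : ℕ → ℕ) :
    pathIdealW n K w =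
      Ideal.span ((fun d => monomial d (1 : K)) ''
        {d | ∃ j, 1 ≤ j ∧ j + 1 ≤ n ∧ d = vexp n w j}) := by
  unfold pathIdealW
  congr 1
  ext p
  constructor
  · rintro ⟨j, hj1, hj2, rfl⟩
    exact ⟨vexp n w j, ⟨j, hj1, by omega, rfl⟩, (pu_pow_eq n K w j hj1 (by omega)).symm⟩
  · rintro ⟨d, ⟨j, hj1, hj2, rfl⟩, rfl⟩
    exact ⟨j, hj1, by omega, (pu_pow_eq n K w j hj1 hj2).symm⟩

section Extract
variable {n : ℕ} {K : Type*} [Field K] {w : ℕ → ℕ}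

lemma mem_I_supp {z : MvPolynomial (Fin n) K} (hz : z ∈ pathIdealW n K w)
    {β : Fin n →₀ ℕ} (hβ : β ∈ z.support) :
    ∃ j ∈ Finset.Icc 1 (n - 1), vexp n w j ≤ β := by
  rw [pathIdealW_eq] at hz
  obtain ⟨si, ⟨j, hj1, hj2, rfl⟩, hle⟩ := mem_ideal_span_monomial_image.mp hz β hβ
  exact ⟨j, Finset.mem_Icc.mpr ⟨hj1, by omega⟩, hle⟩

lemma mem_pow_supp : ∀ (k : ℕ) (z : MvPolynomial (Fin n) K), z ∈ (pathIdealW n K w) ^ k →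
    ∀ β ∈ z.support, ∃ κ : ℕ → ℕ,
      (∑ j ∈ Finset.Icc 1 (n-1), κ j = k) ∧
      (∑ j ∈ Finset.Icc 1 (n-1), κ j • vexp n w j) ≤ β := by
  intro k
  induction k with
  | zero =>
    intro z _ β _
    refine ⟨fun _ => 0, by simp, by simp⟩
  | succ k ih =>
    intro z hz
    rw [pow_succ] at hz
    refine Submodule.mul_induction_on hz ?_ ?_
    · intro a ha b hb β hβ
      have hsupp := MvPolynomial.support_mul a b hβ
      obtain ⟨β₁, hβ₁, β₂, hβ₂, rfl⟩ := Finset.mem_add.mp hsupp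
      obtain ⟨κ₁, hsum₁, hle₁⟩ := ih a ha β₁ hβ₁
      obtain ⟨j, hj, hlej⟩ := mem_I_supp hb hβ₂
      refine ⟨fun j' => κ₁ j' + (if j' = j then 1 else 0), ?_, ?_⟩
      · rw [Finset.sum_add_distrib, hsum₁, Finset.sum_ite_eq' _ j, if_pos hj]
      · calc ∑ j' ∈ Finset.Icc 1 (n-1), (κ₁ j' + if j' = j then 1 else 0) • vexp n w j'
            = (∑ j' ∈ Finset.Icc 1 (n-1), κ₁ j' • vexp n w j') +
              ∑ j' ∈ Finset.Icc 1 (n-1), (if j' = j then 1 else 0) • vexp n w j' := by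
              rw [← Finset.sum_add_distrib]; congr 1; ext j'; rw [add_smul]
          _ = (∑ j' ∈ Finset.Icc 1 (n-1), κ₁ j' • vexp n w j') + vexp n w j := by
              congr 1
              calc ∑ j' ∈ Finset.Icc 1 (n-1), (if j' = j then 1 else 0) • vexp n w j'
                  = ∑ j' ∈ Finset.Icc 1 (n-1), (if j' = j then vexp n w j' else 0) := by
                    apply Finset.sum_congr rfl; intro j' _
                    split <;> simp
                _ = vexp n w j := by rw [Finset.sum_ite_eq' _ j, if_pos hj]
          _ ≤ β₁ + β₂ := add_le_add hle₁ hlej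
    · intro x y hx hy β hβ
      rcases Finset.mem_union.mp (MvPolynomial.support_add hβ) with h | h
      · exact hx β h
      · exact hy β h

end Extract

section LexTop
variable {n : ℕ} {K : Type*} [Field K]

lemma toLex_add' (a b : Fin n →₀ ℕ) : toLex (a + b) = toLex a + toLex b := rfl

lemma pow_top (z : MvPolynomial (Fin n) K) (α : Fin n →₀ ℕ)
    (hmax : ∀ γ ∈ z.support, toLex γ ≤ toLex α) : ∀ N : ℕ,
    (∀ γ ∈ (z ^ N).support, toLex γ ≤ toLex (N • α)) ∧
      MvPolynomial.coeff (N • α) (z ^ N) = (MvPolynomial.coeff α z) ^ N := by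
  intro N
  induction N with
  | zero =>
    constructor
    · intro γ hγ
      rw [pow_zero] at hγ
      have : γ = 0 := by
        rw [MvPolynomial.mem_support_iff, MvPolynomial.coeff_one] at hγ
        by_contra h
        rw [if_neg (fun he => h he.symm)] at hγ
        exact hγ rfl
      simp [this, zero_smul]
    · simp [MvPolynomial.coeff_one]
  | succ N ih =>
    have hsmul : (N + 1) • α = N • α + α := succ_nsmul α N
    constructor
    · intro γ hγ
      rw [pow_succ] at hγ
      obtain ⟨b, hb, c, hc, rfl⟩ := Finset.mem_add.mp (MvPolynomial.support_mul _ _ hγ)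
      rw [hsmul, toLex_add', toLex_add']
      exact add_le_add (ih.1 b hb) (hmax c hc)
    · rw [pow_succ, MvPolynomial.coeff_mul, hsmul]
      rw [Finset.sum_eq_single_of_mem (N • α, α)
        (Finset.HasAntidiagonal.mem_antidiagonal.mpr rfl)]
      · rw [ih.2, pow_succ]
      · rintro ⟨a, b⟩ hmem hne
        have hab : a + b = N • α + α := Finset.HasAntidiagonal.mem_antidiagonal.mp hmem
        by_contra h
        have ha : a ∈ (z ^ N).support := by
          rw [MvPolynomial.mem_support_iff]; intro h0; rw [h0, zero_mul] at h; exact h rfl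
        have hbs : b ∈ z.support := by
          rw [MvPolynomial.mem_support_iff]; intro h0; rw [h0, mul_zero] at h; exact h rfl
        have h1 : toLex a ≤ toLex (N • α) := ih.1 a ha
        have h2 : toLex b ≤ toLex α := hmax b hbs
        have heq : toLex a + toLex b = toLex (N • α) + toLex α := by
          rw [← toLex_add', ← toLex_add', hab]
        have hb_eq : toLex b = toLex α := by
          rcases lt_or_eq_of_le h2 with hlt | he
          · exfalso
            have : toLex a + toLex b < toLex (N • α) + toLex α :=
              add_lt_add_of_le_of_lt h1 hlt
            rw [heq] at this; exact lt_irrefl _ this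
          · exact he
        have hbα : b = α := toLex.injective hb_eq
        have haα : a = N • α := by
          have : a + b = N • α + b := by rw [hab, hbα]
          exact add_right_cancel this
        exact hne (by rw [haα, hbα])

end LexTop

section IntOver
variable {R : Type*} [CommRing R]

lemma mem_sum_of_mem {f : ℕ → Ideal R} {s : Finset ℕ} {i : ℕ} (hi : i ∈ s) {x : R}
    (hx : x ∈ f i) : x ∈ ∑ j ∈ s, f j := by
  rw [← Finset.add_sum_erase _ f hi, Submodule.add_eq_sup]
  exact Submodule.mem_sup_left hx

lemma mul_span_sum_decomp {f : ℕ → Ideal R} {y : ℕ → R} {s : Finset ℕ} :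
    ∀ {x : R}, x ∈ ∑ j ∈ s, f j * Ideal.span {y j} →
    ∃ q : ℕ → R, (∀ j ∈ s, q j ∈ f j) ∧ x = ∑ j ∈ s, q j * y j := by
  induction s using Finset.induction with
  | empty => intro x hx; simp at hx; exact ⟨fun _ => 0, by simp, by simp [hx]⟩
  | @insert a s ha ih =>
    intro x hx
    rw [Finset.sum_insert ha, Submodule.add_eq_sup] at hx
    obtain ⟨u, hu, v, hv, rfl⟩ := Submodule.mem_sup.mp hx
    obtain ⟨qa, hqa, hqae⟩ := Ideal.mem_mul_span_singleton.mp hu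
    obtain ⟨q, hq, rfl⟩ := ih hv
    refine ⟨fun j => if j = a then qa else q j, ?_, ?_⟩
    · intro j hj
      rcases Finset.mem_insert.mp hj with rfl | hj
      · simpa using hqa
      · have hne : j ≠ a := fun he => ha (he ▸ hj)
        show (if j = a then qa else q j) ∈ f j
        rw [if_neg hne]; exact hq j hj
    · show u + _ = _
      rw [Finset.sum_insert ha]
      show _ = (if a = a then qa else q a) * y a + _
      rw [if_pos rfl, hqae]
      congr 1
      refine Finset.sum_congr rfl fun j hj => ?_
      show q j * y j = (if j = a then qa else q j) * y j
      have hne : j ≠ a := fun he => ha (he ▸ hj)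
      rw [if_neg hne]

/-- the ideal `∑_{c<m} I^{N-c}·(z^c)` -/
def JJ (I : Ideal R) (z : R) (m N : ℕ) : Ideal R :=
  ∑ c ∈ Finset.range m, I ^ (N - c) * Ideal.span {z ^ c}

lemma claim1 {I : Ideal R} {z : R} {m : ℕ} (hm : 0 < m) {c : ℕ → R}
    (hc : ∀ i, c i ∈ I ^ i)
    (heq : z ^ m + ∑ i ∈ Finset.range m, c (i + 1) * z ^ (m - 1 - i) = 0) :
    z ^ m ∈ JJ I z m m := by
  have hz : z ^ m = -∑ i ∈ Finset.range m, c (i + 1) * z ^ (m - 1 - i) :=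
    eq_neg_of_add_eq_zero_left heq
  rw [hz]
  refine neg_mem (Submodule.sum_mem _ fun i hi => ?_)
  rw [Finset.mem_range] at hi
  refine mem_sum_of_mem (f := fun c' => I ^ (m - c') * Ideal.span {z ^ c'})
    (Finset.mem_range.mpr (by omega : m - 1 - i < m)) ?_
  show c (i + 1) * z ^ (m - 1 - i) ∈ I ^ (m - (m - 1 - i)) * Ideal.span {z ^ (m - 1 - i)}
  have h1 : m - (m - 1 - i) = i + 1 := by omega
  rw [h1]
  exact Ideal.mul_mem_mul (hc (i+1)) (Ideal.mem_span_singleton_self _)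

lemma lemA {I : Ideal R} {z : R} {m : ℕ} (hm : 0 < m) (hzm : z ^ m ∈ JJ I z m m) :
    ∀ N, m ≤ N → z ^ N ∈ JJ I z m N := by
  intro N hN
  induction N, hN using Nat.le_induction with
  | base => exact hzm
  | succ N hN ih =>
    obtain ⟨q, hq, hdec⟩ := mul_span_sum_decomp (f := fun c => I ^ (N - c))
      (y := fun c => z ^ c) ih
    have hz1 : z ^ (N + 1) = ∑ c ∈ Finset.range m, q c * z ^ (c + 1) := by
      rw [pow_succ, hdec, Finset.sum_mul]
      exact Finset.sum_congr rfl fun c _ => by ring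
    rw [hz1]
    refine Submodule.sum_mem _ fun c hc => ?_
    rw [Finset.mem_range] at hc
    rcases Nat.lt_or_ge (c + 1) m with h | h
    · refine mem_sum_of_mem (f := fun c' => I ^ (N + 1 - c') * Ideal.span {z ^ c'})
        (Finset.mem_range.mpr h) ?_
      show q c * z ^ (c + 1) ∈ I ^ (N + 1 - (c + 1)) * Ideal.span {z ^ (c + 1)}
      have : N + 1 - (c + 1) = N - c := by omega
      rw [this]
      exact Ideal.mul_mem_mul (hq c (Finset.mem_range.mpr hc)) (Ideal.mem_span_singleton_self _)
    · -- c = m - 1, so z^(c+1) = z^m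
      have hcm : c + 1 = m := by omega
      obtain ⟨q', hq', hdec'⟩ := mul_span_sum_decomp (f := fun c' => I ^ (m - c'))
        (y := fun c' => z ^ c') hzm
      have hz2 : q c * z ^ (c + 1) = ∑ c' ∈ Finset.range m, (q c * q' c') * z ^ c' := by
        rw [hcm, hdec', Finset.mul_sum]
        exact Finset.sum_congr rfl fun c' _ => by ring
      rw [hz2]
      refine Submodule.sum_mem _ fun c' hc' => ?_
      rw [Finset.mem_range] at hc'
      refine mem_sum_of_mem (f := fun c'' => I ^ (N + 1 - c'') * Ideal.span {z ^ c''})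
        (Finset.mem_range.mpr hc') ?_
      show (q c * q' c') * z ^ c' ∈ I ^ (N + 1 - c') * Ideal.span {z ^ c'}
      refine Ideal.mul_mem_mul ?_ (Ideal.mem_span_singleton_self _)
      have hmul : q c * q' c' ∈ I ^ (N - c) * I ^ (m - c') :=
        Ideal.mul_mem_mul (hq c (Finset.mem_range.mpr hc)) (hq' c' (Finset.mem_range.mpr hc'))
      rw [← pow_add] at hmul
      have : N - c + (m - c') = N + 1 - c' := by omega
      rwa [this] at hmul

lemma lemS1 {I : Ideal R} {z t : R} (ht : t ∈ I) (c : ℕ) :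
    ∃ r : ℕ → R, (∀ b ∈ Finset.range (c + 1), r b ∈ I ^ (c - b)) ∧
      z ^ c = ∑ b ∈ Finset.range (c + 1), r b * (z - t) ^ b := by
  refine ⟨fun b => t ^ (c - b) * (Nat.choose c b : R), ?_, ?_⟩
  · intro b _
    exact Ideal.mul_mem_right _ _ (Ideal.pow_mem_pow ht _)
  · have h := add_pow (z - t) t c
    rw [sub_add_cancel] at h
    rw [h]
    exact Finset.sum_congr rfl fun b _ => by ring

lemma lemB {I : Ideal R} {z t : R} {m : ℕ} (hm : 0 < m) (ht : t ∈ I)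
    (hzm : z ^ m ∈ JJ I z m m) : (z - t) ^ m ∈ JJ I (z - t) m m := by
  set z' := z - t with hz'
  -- first: z^m ∈ JJ I z' m m
  have hzmT : ∀ k < m, ∀ x, x ∈ I ^ (m - k) → x * z ^ k ∈ JJ I z' m m := by
    intro k hk x hx
    obtain ⟨r, hr, hrd⟩ := lemS1 (z := z) ht k
    have : x * z ^ k = ∑ b ∈ Finset.range (k + 1), (x * r b) * z' ^ b := by
      rw [hrd, Finset.mul_sum]
      exact Finset.sum_congr rfl fun b _ => by ring
    rw [this]
    refine Submodule.sum_mem _ fun b hb => ?_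
    rw [Finset.mem_range] at hb
    rcases Nat.lt_or_ge b m with hbm | hbm
    · refine mem_sum_of_mem (f := fun c'' => I ^ (m - c'') * Ideal.span {z' ^ c''})
        (Finset.mem_range.mpr hbm) ?_
      refine Ideal.mul_mem_mul ?_ (Ideal.mem_span_singleton_self _)
      have hmul : x * r b ∈ I ^ (m - k) * I ^ (k - b) :=
        Ideal.mul_mem_mul hx (hr b (Finset.mem_range.mpr hb))
      rw [← pow_add] at hmul
      have : m - k + (k - b) = m - b := by omega
      rwa [this] at hmul
    · exact absurd hbm (by omega)
  have hzmInT : z ^ m ∈ JJ I z' m m := by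
    obtain ⟨q, hq, hdec⟩ := mul_span_sum_decomp (f := fun c' => I ^ (m - c'))
      (y := fun c' => z ^ c') hzm
    rw [hdec]
    exact Submodule.sum_mem _ fun c hc => by
      rw [Finset.mem_range] at hc
      exact hzmT c hc (q c) (hq c (Finset.mem_range.mpr hc))
  have hexp : z' ^ m = ∑ k ∈ Finset.range (m + 1), z ^ k * (-t) ^ (m - k) * (Nat.choose m k : R) := by
    have h := add_pow z (-t) m
    rw [← sub_eq_add_neg] at h
    exact h
  rw [hexp]
  refine Submodule.sum_mem _ fun k hk => ?_
  rw [Finset.mem_range] at hk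
  rcases Nat.lt_or_ge k m with hkm | hkm
  · have hx : (-t) ^ (m - k) * (Nat.choose m k : R) ∈ I ^ (m - k) :=
      Ideal.mul_mem_right _ _ (Ideal.pow_mem_pow (neg_mem ht) _)
    have : z ^ k * (-t) ^ (m - k) * (Nat.choose m k : R)
        = ((-t) ^ (m - k) * (Nat.choose m k : R)) * z ^ k := by ring
    rw [this]
    exact hzmT k hkm _ hx
  · have hkm' : k = m := by omega
    subst hkm'
    exact Ideal.mul_mem_right _ _ (Ideal.mul_mem_right _ _ hzmInT)

end IntOver

section Comb
variable {n : ℕ} {w : ℕ → ℕ}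

lemma vexp_le_crit {j : ℕ} (h1 : 1 ≤ j) (h2 : j + 1 ≤ n) (α : Fin n →₀ ℕ)
    (h : ∀ t : Fin n, (t.val = j - 1 ∨ t.val = j) → w j ≤ α t) :
    vexp n w j ≤ α := by
  rw [Finsupp.le_def]
  intro t
  rw [vexp_apply n w j h1 h2]
  split
  · rename_i ht; exact h t ht
  · exact Nat.zero_le _

lemma vexp_le_dest {j : ℕ} (h1 : 1 ≤ j) (h2 : j + 1 ≤ n) (α : Fin n →₀ ℕ)
    (h : vexp n w j ≤ α) :
    ∀ t : Fin n, (t.val = j - 1 ∨ t.val = j) → w j ≤ α t := by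
  intro t ht
  have := Finsupp.le_def.mp h t
  rwa [vexp_apply n w j h1 h2, if_pos ht] at this

lemma exists_coord (hn : 2 ≤ n) {j : ℕ} (hj : j ≤ n - 1) (v : ℕ) (hv : v = j - 1 ∨ v = j) :
    ∃ t : Fin n, t.val = v := ⟨⟨v, by omega⟩, rfl⟩

lemma lemC (hn : 2 ≤ n) (hw : ∀ i, 1 ≤ i → i ≤ n - 1 → 0 < w i)
    (hPair : ∀ i, 1 ≤ i → i ≤ n - 1 → ∀ j, 1 ≤ j → j ≤ n - 1 →
      1 < w i → 1 < w j → i < j → j = i + 2)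
    (α : Fin n →₀ ℕ) (m N : ℕ) (hm : 0 < m) (hN1 : m ≤ N)
    (hN2 : ∀ j, 1 ≤ j → j ≤ n - 1 → (m - 1) * w j < N)
    (κ : ℕ → ℕ) (hκ : N - m + 1 ≤ ∑ j ∈ Finset.Icc 1 (n - 1), κ j)
    (hineq : ∑ j ∈ Finset.Icc 1 (n - 1), κ j • vexp n w j ≤ N • α) :
    ∃ j, 1 ≤ j ∧ j ≤ n - 1 ∧ vexp n w j ≤ α := by
  by_contra hcon
  push_neg at hcon
  have hpt : ∀ t : Fin n, ∑ j ∈ Finset.Icc 1 (n - 1), κ j * (vexp n w j t) ≤ N * α t := by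
    intro t
    have h := Finsupp.le_def.mp hineq t
    rw [Finset.sum_apply', Finsupp.smul_apply] at h
    simpa using h
  have hterm : ∀ j, 1 ≤ j → j ≤ n - 1 → ∀ t : Fin n,
      κ j * (vexp n w j t) ≤ N * α t := by
    intro j hj1 hj2 t
    refine le_trans ?_ (hpt t)
    exact Finset.single_le_sum (f := fun j' => κ j' * (vexp n w j' t))
      (fun _ _ => Nat.zero_le _) (Finset.mem_Icc.mpr ⟨hj1, hj2⟩)
  have key0 : ∀ j, 1 ≤ j → j ≤ n - 1 → ∀ t : Fin n, (t.val = j - 1 ∨ t.val = j) →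
      κ j * w j ≤ N * α t := by
    intro j hj1 hj2 t ht
    have h := hterm j hj1 hj2 t
    rwa [vexp_apply n w j hj1 (by omega), if_pos ht] at h
  have key1 : ∀ j, 1 ≤ j → j ≤ n - 1 → κ j ≠ 0 → ∀ t : Fin n,
      (t.val = j - 1 ∨ t.val = j) → 1 ≤ α t := by
    intro j hj1 hj2 hκj t ht
    have h := key0 j hj1 hj2 t ht
    have hpos : 0 < κ j * w j := Nat.mul_pos (Nat.pos_of_ne_zero hκj) (hw j hj1 hj2)
    rcases Nat.eq_zero_or_pos (α t) with h0 | h0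
    · rw [h0, mul_zero] at h; omega
    · exact h0
  have key2 : ∀ j, 1 ≤ j → j ≤ n - 1 → κ j ≠ 0 → 1 < w j := by
    intro j hj1 hj2 hκj
    by_contra h
    have hw1 : w j = 1 := by have := hw j hj1 hj2; omega
    refine hcon j hj1 hj2 (vexp_le_crit hj1 (by omega) α fun t ht => ?_)
    rw [hw1]
    exact key1 j hj1 hj2 hκj t ht
  have key3 : ∀ p, 1 ≤ p → p ≤ n - 1 → κ p ≠ 0 →
      ∀ q, 1 ≤ q → q ≤ n - 1 → κ q ≠ 0 → ¬ (p < q) := by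
    intro p hp1 hp2 hκp q hq1 hq2 hκq hpq
    have hq' : q = p + 2 :=
      hPair p hp1 hp2 q hq1 hq2 (key2 p hp1 hp2 hκp) (key2 q hq1 hq2 hκq) hpq
    have hb1 : 1 ≤ p + 1 := by omega
    have hb2 : p + 1 ≤ n - 1 := by omega
    by_cases hwp1 : 1 < w (p + 1)
    · have := hPair p hp1 hp2 (p + 1) hb1 hb2 (key2 p hp1 hp2 hκp) hwp1 (by omega)
      omega
    · have hw1 : w (p + 1) = 1 := by have := hw (p + 1) hb1 hb2; omega
      refine hcon (p + 1) hb1 hb2 (vexp_le_crit hb1 (by omega) α fun t ht => ?_)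
      rw [hw1]
      rcases ht with ht | ht
      · exact key1 p hp1 hp2 hκp t (Or.inr (by omega))
      · exact key1 q hq1 hq2 hκq t (Or.inl (by omega))
  have hex : ∃ p ∈ Finset.Icc 1 (n - 1), κ p ≠ 0 := by
    by_contra h
    push_neg at h
    rw [Finset.sum_eq_zero h] at hκ
    omega
  obtain ⟨p, hpE, hκp⟩ := hex
  rw [Finset.mem_Icc] at hpE
  obtain ⟨hp1, hp2⟩ := hpE
  have hsum : ∑ j ∈ Finset.Icc 1 (n - 1), κ j = κ p := by
    refine Finset.sum_eq_single p ?_ ?_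
    · intro b hb hbp
      rw [Finset.mem_Icc] at hb
      by_contra hκb
      rcases Nat.lt_or_ge b p with h | h
      · exact key3 b hb.1 hb.2 hκb p hp1 hp2 hκp h
      · exact key3 p hp1 hp2 hκp b hb.1 hb.2 hκb (by omega)
    · intro h
      exact absurd (Finset.mem_Icc.mpr ⟨hp1, hp2⟩) h
  have hκpN : N - m + 1 ≤ κ p := by omega
  refine hcon p hp1 hp2 (vexp_le_crit hp1 (by omega) α fun t ht => ?_)
  have h := key0 p hp1 hp2 t ht
  by_contra hlt
  push_neg at hlt
  have h1 : (N - m + 1) * w p ≤ N * α t :=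
    le_trans (Nat.mul_le_mul_right _ hκpN) h
  have h2 : N * α t + N ≤ N * w p := by
    have hle : α t + 1 ≤ w p := hlt
    calc N * α t + N = N * (α t + 1) := by ring
      _ ≤ N * w p := Nat.mul_le_mul_left _ hle
  have h3 : (N - m + 1) * w p + (m - 1) * w p = N * w p := by
    rw [← add_mul]
    congr 1
    omega
  have h4 := hN2 p hp1 hp2
  omega
end Comb

section Backward
variable {n : ℕ} {K : Type*} [Field K] {w : ℕ → ℕ}

lemma key_ind (hn : 2 ≤ n) (hw : ∀ i, 1 ≤ i → i ≤ n - 1 → 0 < w i)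
    (hPair : ∀ i, 1 ≤ i → i ≤ n - 1 → ∀ j, 1 ≤ j → j ≤ n - 1 →
      1 < w i → 1 < w j → i < j → j = i + 2) :
    ∀ k : ℕ, ∀ z : MvPolynomial (Fin n) K, z.support.card ≤ k →
      (∃ m, 0 < m ∧ z ^ m ∈ JJ (pathIdealW n K w) z m m) → z ∈ pathIdealW n K w := by
  intro k
  induction k with
  | zero =>
    intro z hcard _
    have : z.support = ∅ := Finset.card_eq_zero.mp (Nat.le_zero.mp hcard)
    rw [MvPolynomial.support_eq_empty.mp this]
    exact zero_mem _
  | succ k ih =>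
    intro z hcard hint
    obtain ⟨m, hm, hzm⟩ := hint
    by_cases hz0 : z = 0
    · rw [hz0]; exact zero_mem _
    have hne : z.support.Nonempty := by
      rw [Finset.nonempty_iff_ne_empty]
      intro h
      exact hz0 (MvPolynomial.support_eq_empty.mp h)
    obtain ⟨α, hα, hαmax⟩ := Finset.exists_max_image z.support toLex hne
    set I := pathIdealW n K w with hI
    set N := m + m * (∑ j ∈ Finset.Icc 1 (n - 1), w j) with hN
    have hN1 : m ≤ N := Nat.le_add_right _ _
    have hN2 : ∀ j, 1 ≤ j → j ≤ n - 1 → (m - 1) * w j < N := by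
      intro j hj1 hj2
      have h1 : w j ≤ ∑ j' ∈ Finset.Icc 1 (n - 1), w j' :=
        Finset.single_le_sum (fun _ _ => Nat.zero_le _) (Finset.mem_Icc.mpr ⟨hj1, hj2⟩)
      have h2 : (m - 1) * w j ≤ m * (∑ j' ∈ Finset.Icc 1 (n - 1), w j') :=
        Nat.mul_le_mul (by omega) h1
      omega
    have hzN : z ^ N ∈ JJ I z m N := lemA hm hzm N hN1
    obtain ⟨q, hq, hdec⟩ := mul_span_sum_decomp (f := fun c => I ^ (N - c))
      (y := fun c => z ^ c) hzN
    have hctop : MvPolynomial.coeff (N • α) (z ^ N) = (MvPolynomial.coeff α z) ^ N :=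
      (pow_top z α hαmax N).2
    have hcne : MvPolynomial.coeff (N • α) (z ^ N) ≠ 0 := by
      rw [hctop]
      exact pow_ne_zero _ (MvPolynomial.mem_support_iff.mp hα)
    rw [hdec] at hcne
    rw [MvPolynomial.coeff_sum] at hcne
    obtain ⟨c, hcmem, hcne2⟩ := Finset.exists_ne_zero_of_sum_ne_zero hcne
    rw [Finset.mem_range] at hcmem
    rw [MvPolynomial.coeff_mul] at hcne2
    obtain ⟨x, hxmem, hxne⟩ := Finset.exists_ne_zero_of_sum_ne_zero hcne2
    have hβ : x.1 ∈ (q c).support := by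
      rw [MvPolynomial.mem_support_iff]
      intro h0
      rw [h0, zero_mul] at hxne
      exact hxne rfl
    obtain ⟨κ, hκsum, hκle⟩ := mem_pow_supp (N - c) (q c)
      (hq c (Finset.mem_range.mpr hcmem)) x.1 hβ
    have hxle : x.1 ≤ N • α := by
      have := Finset.HasAntidiagonal.mem_antidiagonal.mp hxmem
      calc x.1 ≤ x.1 + x.2 := self_le_add_right _ _
        _ = N • α := this
    have hexists := lemC hn hw hPair α m N hm hN1 hN2 κ (by omega) (le_trans hκle hxle)
    obtain ⟨j, hj1, hj2, hjle⟩ := hexists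
    -- the top monomial of z is in I
    have hgen : (MvPolynomial.monomial (vexp n w j) (1 : K)) ∈ I := by
      rw [hI, pathIdealW_eq]
      exact Ideal.subset_span ⟨vexp n w j, ⟨j, hj1, by omega, rfl⟩, rfl⟩
    set t := MvPolynomial.monomial α (MvPolynomial.coeff α z) with htdef
    have ht : t ∈ I := by
      have : t = MvPolynomial.monomial (α - vexp n w j) (MvPolynomial.coeff α z) *
          MvPolynomial.monomial (vexp n w j) 1 := by
        rw [MvPolynomial.monomial_mul, tsub_add_cancel_of_le hjle, mul_one]
      rw [this]
      exact Ideal.mul_mem_left _ _ hgen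
    have hsupp' : (z - t).support = z.support.erase α := by
      ext β
      rw [Finset.mem_erase, MvPolynomial.mem_support_iff, MvPolynomial.mem_support_iff,
        MvPolynomial.coeff_sub, htdef, MvPolynomial.coeff_monomial]
      by_cases hβ' : α = β
      · subst hβ'
        simp
      · rw [if_neg hβ', sub_zero]
        have : β ≠ α := fun h => hβ' h.symm
        simp [this]
    have hcard' : (z - t).support.card ≤ k := by
      rw [hsupp', Finset.card_erase_of_mem hα]
      omega
    have hint' : (z - t) ^ m ∈ JJ I (z - t) m m := lemB hm ht hzm
    have hz' : z - t ∈ I := ih (z - t) hcard' ⟨m, hm, hint'⟩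
    have : z = (z - t) + t := by ring
    rw [this]
    exact add_mem hz' ht

lemma backward (hn : 2 ≤ n) (hw : ∀ i, 1 ≤ i → i ≤ n - 1 → 0 < w i)
    (hPair : ∀ i, 1 ≤ i → i ≤ n - 1 → ∀ j, 1 ≤ j → j ≤ n - 1 →
      1 < w i → 1 < w j → i < j → j = i + 2) :
    IsIntegrallyClosedIdeal (pathIdealW n K w) := by
  intro z hz
  obtain ⟨m, hm, c, hc, heq⟩ := hz
  exact key_ind hn hw hPair z.support.card z le_rfl ⟨m, hm, claim1 hm hc heq⟩
end Backward

section Forward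
variable {n : ℕ} {K : Type*} [Field K] {w : ℕ → ℕ}

lemma gen_mem (j : ℕ) (hj1 : 1 ≤ j) (hj2 : j ≤ n - 1) :
    (MvPolynomial.monomial (vexp n w j) (1 : K)) ∈ pathIdealW n K w := by
  rw [pathIdealW_eq]
  exact Ideal.subset_span ⟨_, ⟨j, hj1, by omega, rfl⟩, rfl⟩

lemma monomial_not_mem (δ : Fin n →₀ ℕ)
    (h : ∀ j, 1 ≤ j → j ≤ n - 1 → ¬ vexp n w j ≤ δ) :
    (MvPolynomial.monomial δ (1 : K)) ∉ pathIdealW n K w := by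
  rw [pathIdealW_eq]
  intro hmem
  classical
  have hδs : δ ∈ (MvPolynomial.monomial δ (1 : K)).support := by
    rw [MvPolynomial.support_monomial, if_neg (one_ne_zero)]
    exact Finset.mem_singleton_self δ
  obtain ⟨si, ⟨j, hj1, hj2, rfl⟩, hle⟩ :=
    MvPolynomial.mem_ideal_span_monomial_image.mp hmem δ hδs
  exact h j hj1 (by omega) hle

lemma vexp_smul (j : ℕ) : vexp n w j = w j • vexp n (fun _ => 1) j := by
  unfold vexp
  by_cases h : 1 ≤ j ∧ j + 1 ≤ n
  · rw [dif_pos h, dif_pos h, smul_smul]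
    norm_num
  · rw [dif_neg h, dif_neg h, smul_zero]

lemma forward_witness (hn : 2 ≤ n) (hw : ∀ i, 1 ≤ i → i ≤ n - 1 → 0 < w i)
    (p q : ℕ) (hp1 : 1 ≤ p) (hq2 : q ≤ n - 1) (hpq : p < q) (hq4 : q ≠ p + 2)
    (hwp : 1 < w p) (hwq : 1 < w q) :
    ¬ IsIntegrallyClosedIdeal (pathIdealW n K w) := by
  intro hIC
  set Hp := (w p + 1) / 2 with hHpdef
  set Hq := (w q + 1) / 2 with hHqdef
  have hHp : 2 * Hp ≤ w p + 1 ∧ w p ≤ 2 * Hp := by omega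
  have hHq : 2 * Hq ≤ w q + 1 ∧ w q ≤ 2 * Hq := by omega
  set Vp := vexp n (fun _ => 1) p with hVpdef
  set Vq := vexp n (fun _ => 1) q with hVqdef
  set δ := Hp • Vp + Hq • Vq with hδdef
  set z := MvPolynomial.monomial δ (1 : K) with hzdef
  have hp2 : p ≤ n - 1 := by omega
  have hδ : ∀ t : Fin n, δ t = Hp * (if (t.val = p - 1 ∨ t.val = p) then 1 else 0) +
      Hq * (if (t.val = q - 1 ∨ t.val = q) then 1 else 0) := by
    intro t
    rw [hδdef, Finsupp.add_apply, Finsupp.smul_apply, Finsupp.smul_apply, hVpdef, hVqdef,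
      vexp_apply n (fun _ => 1) p hp1 (by omega), vexp_apply n (fun _ => 1) q (by omega) (by omega)]
    simp
  -- z is not in the ideal
  have hznot : z ∉ pathIdealW n K w := by
    refine monomial_not_mem δ ?_
    intro j hj1 hj2 hle
    obtain ⟨t1, ht1⟩ := exists_coord hn hj2 (j - 1) (Or.inl rfl)
    obtain ⟨t2, ht2⟩ := exists_coord hn hj2 j (Or.inr rfl)
    have h1 := vexp_le_dest hj1 (by omega) δ hle t1 (Or.inl ht1)
    have h2 := vexp_le_dest hj1 (by omega) δ hle t2 (Or.inr ht2)
    rw [hδ t1, ht1] at h1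
    rw [hδ t2, ht2] at h2
    have hwj := hw j hj1 hj2
    rcases eq_or_ne j p with rfl | hjp
    · split_ifs at h1 h2 <;> omega
    rcases eq_or_ne j q with rfl | hjq
    · split_ifs at h1 h2 <;> omega
    split_ifs at h1 h2 <;> omega
  -- z^2 is in the square of the ideal
  have hz2 : z ^ 2 ∈ (pathIdealW n K w) ^ 2 := by
    have hVp : vexp n w p = w p • Vp := vexp_smul p
    have hVq : vexp n w q = w q • Vq := vexp_smul q
    have e1 : 2 * Hp - w p + w p = 2 * Hp := by omega
    have e2 : 2 * Hq - w q + w q = 2 * Hq := by omega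
    have hzeq : z ^ 2 =
        (MvPolynomial.monomial ((2 * Hp - w p) • Vp) (1 : K) *
          MvPolynomial.monomial (vexp n w p) 1) *
        (MvPolynomial.monomial ((2 * Hq - w q) • Vq) (1 : K) *
          MvPolynomial.monomial (vexp n w q) 1) := by
      rw [hzdef, MvPolynomial.monomial_pow, MvPolynomial.monomial_mul,
        MvPolynomial.monomial_mul, MvPolynomial.monomial_mul, hVp, hVq,
        ← add_smul, ← add_smul, e1, e2, hδdef, smul_add, smul_smul, smul_smul]
      norm_num
    rw [hzeq, pow_two]
    exact Ideal.mul_mem_mul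
      (Ideal.mul_mem_left _ _ (gen_mem p hp1 hp2))
      (Ideal.mul_mem_left _ _ (gen_mem q (by omega) hq2))
  -- z is integral over the ideal, contradiction
  refine hznot (hIC z ⟨2, by norm_num, fun k => if k = 2 then -(z ^ 2) else 0, ?_, ?_⟩)
  · intro i
    show (if i = 2 then -(z ^ 2) else 0) ∈ pathIdealW n K w ^ i
    by_cases hi : i = 2
    · rw [hi, if_pos rfl]
      exact neg_mem hz2
    · rw [if_neg hi]
      exact zero_mem _
  · rw [Finset.sum_range_succ, Finset.sum_range_one]
    norm_num

end Forward

section Final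
variable {n : ℕ} {K : Type*} [Field K] {w : ℕ → ℕ}

lemma card_bigs_le
    (hPair : ∀ i, 1 ≤ i → i ≤ n - 1 → ∀ j, 1 ≤ j → j ≤ n - 1 →
      1 < w i → 1 < w j → i < j → j = i + 2) :
    ((Finset.Icc 1 (n - 1)).filter (fun i => 1 < w i)).card ≤ 2 := by
  set s := (Finset.Icc 1 (n - 1)).filter (fun i => 1 < w i) with hs
  rcases s.eq_empty_or_nonempty with he | hne
  · rw [he]; simp
  · have hmem : ∀ b ∈ s, 1 ≤ b ∧ b ≤ n - 1 ∧ 1 < w b := by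
      intro b hb
      rw [hs, Finset.mem_filter, Finset.mem_Icc] at hb
      exact ⟨hb.1.1, hb.1.2, hb.2⟩
    set a := s.min' hne with ha
    have haS := s.min'_mem hne
    have hsub : s ⊆ insert a {a + 2} := by
      intro b hb
      have hab : a ≤ b := s.min'_le b hb
      rcases eq_or_lt_of_le hab with he' | hlt
      · rw [Finset.mem_insert]; left; exact he'.symm
      · obtain ⟨ha1, ha2, ha3⟩ := hmem a haS
        obtain ⟨hb1, hb2, hb3⟩ := hmem b hb
        have := hPair a ha1 ha2 b hb1 hb2 ha3 hb3 hlt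
        rw [Finset.mem_insert, this]
        right; exact Finset.mem_singleton_self _
    calc s.card ≤ (insert a ({a + 2} : Finset ℕ)).card := Finset.card_le_card hsub
      _ ≤ ({a + 2} : Finset ℕ).card + 1 := Finset.card_insert_le _ _
      _ = 2 := by simp

theorem integrally_closed_path_iff' (hn : 2 ≤ n)
    (hw : ∀ i, 1 ≤ i → i ≤ n - 1 → 0 < w i) :
    IsIntegrallyClosedIdeal (pathIdealW n K w) ↔
      (((Finset.Icc 1 (n - 1)).filter (fun i => 1 < w i)).card ≤ 2 ∧
        ∀ i ∈ (Finset.Icc 1 (n - 1)).filter (fun i => 1 < w i),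
          ∀ j ∈ (Finset.Icc 1 (n - 1)).filter (fun i => 1 < w i),
            i < j → j = i + 2) := by
  constructor
  · intro hIC
    by_cases hPair : ∀ i, 1 ≤ i → i ≤ n - 1 → ∀ j, 1 ≤ j → j ≤ n - 1 →
        1 < w i → 1 < w j → i < j → j = i + 2
    · refine ⟨card_bigs_le hPair, ?_⟩
      intro i hi j hj hij
      rw [Finset.mem_filter, Finset.mem_Icc] at hi hj
      exact hPair i hi.1.1 hi.1.2 j hj.1.1 hj.1.2 hi.2 hj.2 hij
    · exfalso
      push_neg at hPair
      obtain ⟨i, hi1, hi2, j, hj1, hj2, hwi, hwj, hij, hne⟩ := hPair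
      exact forward_witness hn hw i j hi1 hj2 hij hne hwi hwj hIC
  · intro ⟨_, hfilter⟩
    refine backward hn hw ?_
    intro i hi1 hi2 j hj1 hj2 hwi hwj hij
    exact hfilter i (Finset.mem_filter.mpr ⟨Finset.mem_Icc.mpr ⟨hi1, hi2⟩, hwi⟩)
      j (Finset.mem_filter.mpr ⟨Finset.mem_Icc.mpr ⟨hj1, hj2⟩, hwj⟩) hij

end Final

/-- `I(P(w))` is integrally closed iff `w` has at most two entries
greater than `1`, and when there are exactly two such entries they occur at positions
`a` and `a + 2`. -/
theorem integrally_closed_path_iff (n : ℕ) (K : Type*) [Field K] (hn : 2 ≤ n)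
    (w : ℕ → ℕ) (hw : ∀ i, 1 ≤ i → i ≤ n - 1 → 0 < w i) :
    IsIntegrallyClosedIdeal (pathIdealW n K w) ↔
      (((Finset.Icc 1 (n - 1)).filter (fun i => 1 < w i)).card ≤ 2 ∧
        ∀ i ∈ (Finset.Icc 1 (n - 1)).filter (fun i => 1 < w i),
          ∀ j ∈ (Finset.Icc 1 (n - 1)).filter (fun i => 1 < w i),
            i < j → j = i + 2) := by
  exact integrally_closed_path_iff' hn hw
end
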